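/- arXiv:1303.1209 — 10 statements merged into one kernel-verified Lean document; each statement's English description precedes it below -/
import Mathlib

section
/- Let A be the 2c × n matrix consisting of the first 2c rows of the n×n inverse discrete Fourier matrix (rows indexed by 0,...,2c−1, with entries A_{τ,j} = ω^{−τj} for an n-th root of unity ω). Then for any vector b ∈ ℂ^{2c}, the linear system Az = b has at most one c-sparse solution z ∈ ℂ^n. -/
/-- The 2c × n matrix consisting of the first 2c rows of the n×n inverse
discrete Fourier matrix (entries `A τ j = ω^{−τj}` with `ω = e^{−2πi/n}`) admits at most
one c-sparse solution `z` to `A z = b`, for any `b ∈ ℂ^{2c}`. -/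
theorem stmt0 (n c : ℕ) (hn : 0 < n)
    (A : Matrix (Fin (2 * c)) (Fin n) ℂ)
    (hA : ∀ (τ : Fin (2 * c)) (j : Fin n),
      A τ j = Complex.exp (-(2 * Real.pi * Complex.I) / n) ^ (-(((τ : ℕ) * (j : ℕ) : ℕ) : ℤ)))
    (b : Fin (2 * c) → ℂ) (z₁ z₂ : Fin n → ℂ)
    (hz₁ : {i | z₁ i ≠ 0}.ncard ≤ c) (hz₂ : {i | z₂ i ≠ 0}.ncard ≤ c)
    (h₁ : A.mulVec z₁ = b) (h₂ : A.mulVec z₂ = b) :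
    z₁ = z₂ := by
  classical
  set ζ : ℂ := Complex.exp (2 * Real.pi * Complex.I / n) with hζdef
  have hζ : IsPrimitiveRoot ζ n := Complex.isPrimitiveRoot_exp n hn.ne'
  have hωζ : Complex.exp (-(2 * Real.pi * Complex.I) / n) = ζ⁻¹ := by
    rw [hζdef, ← Complex.exp_neg, neg_div]
  -- rewrite entries of A
  have hA' : ∀ (τ : Fin (2 * c)) (j : Fin n),
      A τ j = (ζ ^ (j : ℕ)) ^ (τ : ℕ) := by
    intro τ j
    rw [hA, hωζ]
    rw [zpow_neg, ← inv_zpow, inv_inv, zpow_natCast, mul_comm, pow_mul]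
  set d : Fin n → ℂ := z₁ - z₂ with hd
  have hAd : A.mulVec d = 0 := by
    rw [hd, Matrix.mulVec_sub, h₁, h₂, sub_self]
  -- support finset
  set s : Finset (Fin n) := Finset.univ.filter (fun j => d j ≠ 0) with hs
  have hscard : s.card ≤ 2 * c := by
    have hsub : {i | d i ≠ 0} ⊆ {i | z₁ i ≠ 0} ∪ {i | z₂ i ≠ 0} := by
      intro i hi
      by_contra hcon
      simp only [Set.mem_union, Set.mem_setOf_eq, not_or, not_not] at hcon
      apply hi
      simp [hd, hcon.1, hcon.2, Pi.sub_apply]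
    have h1 : ({i | d i ≠ 0} : Set (Fin n)).ncard ≤ 2 * c := by
      calc ({i | d i ≠ 0} : Set (Fin n)).ncard
          ≤ ({i | z₁ i ≠ 0} ∪ {i | z₂ i ≠ 0} : Set (Fin n)).ncard :=
            Set.ncard_le_ncard hsub (Set.toFinite _)
        _ ≤ ({i | z₁ i ≠ 0} : Set (Fin n)).ncard + ({i | z₂ i ≠ 0} : Set (Fin n)).ncard :=
            Set.ncard_union_le _ _
        _ ≤ c + c := add_le_add hz₁ hz₂
        _ = 2 * c := (two_mul c).symm
    have h2 : ({i | d i ≠ 0} : Set (Fin n)).ncard = s.card := by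
      rw [Set.ncard_eq_toFinset_card']
      congr 1
      ext i
      simp [hs]
    rwa [h2] at h1
  set m : ℕ := s.card with hm
  set e : Fin m ↪o Fin n := s.orderEmbOfFin rfl with he
  have hemem : ∀ k, e k ∈ s := fun k => s.orderEmbOfFin_mem rfl k
  have himage : Finset.univ.image (fun k => e k) = s := by
    apply Finset.coe_injective
    rw [Finset.coe_image, Finset.coe_univ, Set.image_univ]
    exact s.range_orderEmbOfFin rfl
  -- nodes
  set f : Fin m → ℂ := fun k => ζ ^ ((e k : Fin n) : ℕ) with hf
  have hfinj : Function.Injective f := by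
    intro k₁ k₂ hk
    apply e.injective
    have := hζ.pow_inj (e k₁).isLt (e k₂).isLt hk
    exact Fin.ext this
  set v : Fin m → ℂ := fun k => d (e k) with hv
  have hfv : ∀ i : Fin m, (∑ k : Fin m, v k * f k ^ (i : ℕ)) = 0 := by
    intro i
    have hi2c : (i : ℕ) < 2 * c := lt_of_lt_of_le i.isLt hscard
    have hrow : ∑ j : Fin n, A ⟨(i : ℕ), hi2c⟩ j * d j = 0 := by
      have := congrFun hAd ⟨(i : ℕ), hi2c⟩
      simpa [Matrix.mulVec, dotProduct] using this
    have hrow' : ∑ j : Fin n, d j * (ζ ^ (j : ℕ)) ^ (i : ℕ) = 0 := by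
      rw [← hrow]
      apply Finset.sum_congr rfl
      intro j _
      rw [hA']
      ring
    have hsum_s : ∑ j ∈ s, d j * (ζ ^ (j : ℕ)) ^ (i : ℕ) = 0 := by
      rw [← hrow']
      apply Finset.sum_subset (Finset.subset_univ s)
      intro j _ hj
      have : d j = 0 := by
        by_contra hdj
        exact hj (by simp [hs, hdj])
      simp [this]
    calc (∑ k : Fin m, v k * f k ^ (i : ℕ))
        = ∑ k ∈ Finset.univ.image (fun k => e k),
            d k * (ζ ^ (k : ℕ)) ^ (i : ℕ) := by
          rw [Finset.sum_image (fun a _ b _ h => e.injective h)]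
      _ = ∑ j ∈ s, d j * (ζ ^ (j : ℕ)) ^ (i : ℕ) := by rw [himage]
      _ = 0 := hsum_s
  have hv0 : v = 0 := Matrix.eq_zero_of_forall_pow_sum_mul_pow_eq_zero hfinj hfv
  have hd0 : d = 0 := by
    funext j
    show d j = (0 : ℂ)
    by_cases hj : j ∈ s
    · rw [← himage] at hj
      obtain ⟨k, _, hk⟩ := Finset.mem_image.mp hj
      have := congrFun hv0 k
      simpa [hv, hk] using this
    · by_contra hdj
      exact hj (by simp [hs, hdj])
  have := sub_eq_zero.mp (hd ▸ hd0 : z₁ - z₂ = 0)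
  exact this
end

section
/- Let y ∈ ℂ^m be a random vector drawn from a permutation-invariant distribution with exactly r nonzero values, where 2 ≤ r ≤ c−1. Let T = {0,...,2c−1} and let A be the 2c × m matrix with A_{τ,j} = ω^{−τj} for a primitive m-th root of unity ω. Then the probability that there exists a vector y' with at most one nonzero entry satisfying A(y − y') = 0 is zero. -/
open MeasureTheory

lemma key_vandermonde {m N : ℕ} (ζ : ℂ) (hζ : IsPrimitiveRoot ζ m)
    (z : Fin m → ℂ) (hcard : {j | z j ≠ 0}.ncard ≤ N)
    (hz : ∀ τ : Fin N, ∑ j : Fin m, ζ ^ ((τ : ℕ) * (j : ℕ)) * z j = 0) : z = 0 := by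
  classical
  set S : Finset (Fin m) := Finset.univ.filter (fun j => z j ≠ 0) with hS
  have hScoe : {j | z j ≠ 0} = ↑S := by ext j; simp [hS]
  have hcard' : S.card ≤ N := by
    rwa [hScoe, Set.ncard_coe_finset] at hcard
  set n := S.card with hn
  set f : Fin n → Fin m := fun k => (S.equivFin.symm k : Fin m) with hf
  have hfS : ∀ k, f k ∈ S := fun k => (S.equivFin.symm k).2
  have hfinj : Function.Injective f :=
    Subtype.val_injective.comp S.equivFin.symm.injective
  set x : Fin n → ℂ := fun k => ζ ^ ((f k : ℕ)) with hx
  have hxinj : Function.Injective x := by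
    intro a b hab
    have := hζ.pow_inj (f a).2 (f b).2 hab
    exact hfinj (Fin.ext this)
  set V : Matrix (Fin n) (Fin n) ℂ := (Matrix.vandermonde x).transpose with hV
  have hVdet : V.det ≠ 0 := by
    rw [hV, Matrix.det_transpose]
    exact Matrix.det_vandermonde_ne_zero_iff.mpr hxinj
  have hmul : V.mulVec (fun k => z (f k)) = 0 := by
    funext τ
    have hsum : ∑ k : Fin n, ζ ^ ((τ : ℕ) * (f k : ℕ)) * z (f k)
        = ∑ j : Fin m, ζ ^ ((τ : ℕ) * (j : ℕ)) * z j := by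
      calc ∑ k : Fin n, ζ ^ ((τ : ℕ) * (f k : ℕ)) * z (f k)
          = ∑ s : S, ζ ^ ((τ : ℕ) * ((s : Fin m) : ℕ)) * z s :=
            Equiv.sum_comp S.equivFin.symm (fun s : S => ζ ^ ((τ : ℕ) * ((s : Fin m) : ℕ)) * z s)
        _ = ∑ j ∈ S, ζ ^ ((τ : ℕ) * (j : ℕ)) * z j :=
            Finset.sum_coe_sort S (fun j => ζ ^ ((τ : ℕ) * (j : ℕ)) * z j)
        _ = ∑ j : Fin m, ζ ^ ((τ : ℕ) * (j : ℕ)) * z j := by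
            refine Finset.sum_subset (Finset.subset_univ S) ?_
            intro j _ hj
            have hzj : z j = 0 := by
              by_contra h
              exact hj (by simp [hS, h])
            simp [hzj]
    have hτN : (τ : ℕ) < N := lt_of_lt_of_le τ.2 hcard'
    calc V.mulVec (fun k => z (f k)) τ
        = ∑ k : Fin n, ζ ^ ((τ : ℕ) * (f k : ℕ)) * z (f k) := by
          simp [Matrix.mulVec, dotProduct, hV, Matrix.vandermonde, hx, ← pow_mul,
            mul_comm ((f _ : ℕ)) ((τ : ℕ))]
      _ = ∑ j : Fin m, ζ ^ ((τ : ℕ) * (j : ℕ)) * z j := hsum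
      _ = 0 := hz ⟨(τ : ℕ), hτN⟩
  have hz0 := Matrix.eq_zero_of_mulVec_eq_zero hVdet hmul
  funext j
  simp only [Pi.zero_apply]
  by_contra hj
  have hjS : j ∈ S := by simp [hS, hj]
  have : z (f (S.equivFin ⟨j, hjS⟩)) = 0 := by
    have h := congrFun hz0 (S.equivFin ⟨j, hjS⟩)
    simpa using h
  rw [hf] at this
  simp only [Equiv.symm_apply_apply] at this
  exact hj this

/-- If `y ∈ ℂ^m` is drawn from a permutation-invariant distribution with
exactly `r` nonzero values, `2 ≤ r ≤ c−1`, and `A` is the 2c × m matrix of the first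
2c rows of the inverse Fourier matrix, then the probability that some 1-sparse `y'`
satisfies `A(y − y') = 0` is zero. -/
theorem stmt1 (m c r : ℕ) (hm : 0 < m) (hr : 2 ≤ r) (hrc : r ≤ c - 1)
    (μ : Measure (Fin m → ℂ)) [IsProbabilityMeasure μ]
    (hperm : ∀ σ : Equiv.Perm (Fin m), Measure.map (fun y => y ∘ σ) μ = μ)
    (hsupp : ∀ᵐ y ∂μ, {j | y j ≠ 0}.ncard = r)
    (A : Matrix (Fin (2 * c)) (Fin m) ℂ)
    (hA : ∀ (τ : Fin (2 * c)) (j : Fin m),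
      A τ j = Complex.exp (-(2 * Real.pi * Complex.I) / m) ^ (-(((τ : ℕ) * (j : ℕ) : ℕ) : ℤ))) :
    μ {y | ∃ y' : Fin m → ℂ, {j | y' j ≠ 0}.ncard ≤ 1 ∧ A.mulVec (y - y') = 0} = 0 := by
  have hm' : (m : ℕ) ≠ 0 := hm.ne'
  set ζ : ℂ := Complex.exp (2 * Real.pi * Complex.I / m) with hζdef
  have hζ : IsPrimitiveRoot ζ m := Complex.isPrimitiveRoot_exp m hm'
  have hAζ : ∀ (τ : Fin (2 * c)) (j : Fin m), A τ j = ζ ^ ((τ : ℕ) * (j : ℕ)) := by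
    intro τ j
    have hω : Complex.exp (-(2 * Real.pi * Complex.I) / m) = ζ⁻¹ := by
      rw [neg_div, Complex.exp_neg]
    rw [hA, hω, zpow_neg, zpow_natCast, ← inv_pow, inv_inv]
  have h0 : μ {y | ¬ ({j | y j ≠ 0}.ncard = r)} = 0 := ae_iff.mp hsupp
  refine measure_mono_null ?_ h0
  intro y hy
  simp only [Set.mem_setOf_eq] at hy ⊢
  obtain ⟨y', hy'card, hy'eq⟩ := hy
  intro hycard
  have hsub : {j | (y - y') j ≠ 0} ⊆ {j | y j ≠ 0} ∪ {j | y' j ≠ 0} := by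
    intro j hj
    by_contra h
    simp only [Set.mem_union, Set.mem_setOf_eq, not_or, not_not] at h
    exact hj (by simp [Pi.sub_apply, h.1, h.2])
  have hcard : {j | (y - y') j ≠ 0}.ncard ≤ 2 * c := by
    have h1 : {j | (y - y') j ≠ 0}.ncard ≤ ({j | y j ≠ 0} ∪ {j | y' j ≠ 0}).ncard :=
      Set.ncard_le_ncard hsub (Set.toFinite _)
    have h2 : ({j | y j ≠ 0} ∪ {j | y' j ≠ 0}).ncard
        ≤ {j | y j ≠ 0}.ncard + {j | y' j ≠ 0}.ncard := Set.ncard_union_le _ _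
    omega
  have hz0 : ∀ τ : Fin (2 * c), ∑ j : Fin m, ζ ^ ((τ : ℕ) * (j : ℕ)) * (y - y') j = 0 := by
    intro τ
    have := congrFun hy'eq τ
    simpa [Matrix.mulVec, dotProduct, hAζ] using this
  have hzero : y - y' = 0 := key_vandermonde ζ hζ _ hcard hz0
  have hyy' : y = y' := sub_eq_zero.mp hzero
  rw [← hyy'] at hy'card
  omega
end

section
/- Let y ∈ ℂ^m be drawn from a permutation-invariant distribution with exactly r ≥ c nonzero values, and let A be the 2c × m matrix of the first 2c rows of the m×m inverse Fourier matrix. Then the probability that there exists a vector y' with at most one nonzero entry and A(y − y') = 0 is at most c·(c/(m−r))^{c−2}. -/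
/-!
By permutation invariance, the probability is the average over `y` of the fraction of `π` for
which `A (y ∘ π⁻¹)` equals `A` applied to a 1-sparse vector, so it suffices to bound that fraction
for a fixed `y` with `r` nonzero entries. Split the support of `y` as `S₀ ⊔ S₁` with
`|S₁| = c - 1` and fix `π` on `S₀`; this fixes the `S₀`-part `u₀` of `y ∘ π⁻¹`. The matrix `A` is
a Vandermonde matrix with distinct nodes, so it kills no nonzero `2c`-sparse vector, and hence
`A w = -A u₀` has at most one `c`-sparse solution `w`. For a bad `π` the `S₁`-part of `y ∘ π⁻¹`
minus a 1-sparse vector is such a solution, so `π(S₁)` differs from the support of `w` in at most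
one point. This leaves at most `m - r + c` of the `binom(m - r + c - 1, c - 1)` equally likely
values of `π(S₁)`, and `(m - r + c) / binom(m - r + c - 1, c - 1) ≤ c (c / (m - r)) ^ (c - 2)`.
-/

open MeasureTheory Finset Function Equiv
open scoped Matrix Nat ENNReal

section SparseInjective

variable {K κ ι : Type*} [Field K] [Fintype ι]

def Matrix.IsSparseInjective (A : Matrix κ ι K) (s : ℕ) : Prop :=
  ∀ v : ι → K, (support v).ncard ≤ s → A *ᵥ v = 0 → v = 0

theorem Matrix.IsSparseInjective.eq_of_mulVec_eq {A : Matrix κ ι K} {s t : ℕ}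
    (hA : A.IsSparseInjective (s + t)) {v w : ι → K} (hv : (support v).ncard ≤ s)
    (hw : (support w).ncard ≤ t) (h : A *ᵥ v = A *ᵥ w) : v = w := by
  refine sub_eq_zero.mp (hA _ ?_ (by rw [Matrix.mulVec_sub, h, sub_self]))
  calc (support (v - w)).ncard ≤ (support v ∪ support w).ncard :=
        Set.ncard_le_ncard (support_sub v w) (Set.toFinite _)
    _ ≤ s + t := (Set.ncard_union_le _ _).trans (add_le_add hv hw)

theorem Matrix.isSparseInjective_of_eq_pow {p : ℕ} {A : Matrix (Fin p) ι K} {x : ι → K}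
    (hx : Injective x) (hA : ∀ τ j, A τ j = x j ^ (τ : ℕ)) : A.IsSparseInjective p := by
  classical
  intro v hv hAv
  set s : Finset ι := {j | v j ≠ 0}
  have hs : #s ≤ p := by rwa [← Set.ncard_coe_finset, coe_filter_univ]
  have hvs : (fun i => v (s.equivFin.symm i)) = 0 := by
    refine Matrix.eq_zero_of_forall_pow_sum_mul_pow_eq_zero
      (fun i j hij => s.equivFin.symm.injective (Subtype.ext (hx hij))) fun i => ?_
    have hrow := congrFun hAv ⟨i, i.2.trans_le hs⟩
    simp only [Matrix.mulVec, dotProduct, hA, Pi.zero_apply] at hrow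
    rw [← sum_subset (subset_univ s) (fun j _ hj => by simp_all [s])] at hrow
    rw [← hrow, ← sum_coe_sort s, ← s.equivFin.symm.sum_comp]
    exact sum_congr rfl fun j _ => mul_comm _ _
  funext j
  by_contra hj
  exact hj (by simpa using congrFun hvs (s.equivFin ⟨j, by simpa [s] using hj⟩))

theorem Matrix.isSparseInjective_of_eq_exp_zpow {m p : ℕ} {A : Matrix (Fin p) (Fin m) ℂ}
    (hA : ∀ (τ : Fin p) (j : Fin m),
      A τ j = Complex.exp (-(2 * Real.pi * Complex.I) / m) ^ (-(((τ : ℕ) * (j : ℕ) : ℕ) : ℤ))) :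
    A.IsSparseInjective p := by
  refine isSparseInjective_of_eq_pow
    (x := fun j => Complex.exp (2 * Real.pi * Complex.I / m) ^ (j : ℕ))
    (fun i j h => Fin.ext ((Complex.isPrimitiveRoot_exp m i.pos.ne').pow_inj i.2 j.2 h))
    fun τ j => ?_
  rw [hA, neg_div, Complex.exp_neg, _root_.inv_zpow', neg_neg, zpow_natCast, ← pow_mul,
    Nat.mul_comm]

end SparseInjective

theorem ncard_support_single_le_one {ι M : Type*} [DecidableEq ι] [Zero M] (j : ι) (t : M) :
    (support (Pi.single j t)).ncard ≤ 1 :=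
  (Set.ncard_le_ncard Pi.support_single_subset (Set.finite_singleton j)).trans_eq
    (Set.ncard_singleton j)

theorem ncard_support_sub_single_le {ι G : Type*} [Finite ι] [DecidableEq ι] [AddGroup G]
    (f : ι → G) (j : ι) (t : G) :
    (support (f - Pi.single j t)).ncard ≤ (support f).ncard + 1 :=
  (Set.ncard_le_ncard (support_sub f _)).trans
    ((Set.ncard_union_le _ _).trans (add_le_add_right (ncard_support_single_le_one j t) _))

theorem exists_eq_single_of_ncard_support_le_one {ι M : Type*} [Finite ι] [DecidableEq ι]
    [Nonempty ι] [Zero M] {f : ι → M} (hf : (support f).ncard ≤ 1) :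
    ∃ j t, f = Pi.single j t := by
  rcases (Set.ncard_le_one_iff_eq (Set.toFinite _)).mp hf with h | ⟨j, hj⟩
  · exact ⟨Classical.arbitrary ι, 0, by simpa using h⟩
  · refine ⟨j, f j, funext fun i => ?_⟩
    by_cases hij : i = j
    · simp [hij]
    · simpa [hij] using (Set.ext_iff.mp hj i).not.mpr hij

section OneSparseAliases

variable {K κ ι : Type*} [Field K] [Fintype ι]

def Matrix.oneSparseAliases (A : Matrix κ ι K) : Set (ι → K) :=
  {y | ∃ y' : ι → K, {j | y' j ≠ 0}.ncard ≤ 1 ∧ A *ᵥ (y - y') = 0}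

theorem Matrix.mem_oneSparseAliases_iff [DecidableEq ι] [Nonempty ι] {A : Matrix κ ι K}
    {x : ι → K} : x ∈ A.oneSparseAliases ↔ ∃ j t, A *ᵥ (x - Pi.single j t) = 0 := by
  constructor
  · rintro ⟨y', hy', hx⟩
    obtain ⟨j, t, rfl⟩ := exists_eq_single_of_ncard_support_le_one hy'
    exact ⟨j, t, hx⟩
  · rintro ⟨j, t, hx⟩
    exact ⟨Pi.single j t, ncard_support_single_le_one j t, hx⟩

theorem Matrix.setOf_exists_mulVec_sub_single_eq_zero [DecidableEq ι] (A : Matrix κ ι K) (j : ι) :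
    {x | ∃ t, A *ᵥ (x - Pi.single j t) = 0} = A.mulVecLin ⁻¹' (K ∙ A *ᵥ Pi.single j 1) := by
  ext x
  simp [Submodule.mem_span_singleton, Matrix.mulVec_sub, sub_eq_zero, eq_comm]

theorem Matrix.measurableSet_oneSparseAliases {𝕜 : Type*} [NontriviallyNormedField 𝕜]
    [CompleteSpace 𝕜] [MeasurableSpace 𝕜] [BorelSpace 𝕜] [SecondCountableTopology 𝕜]
    [Nonempty ι] (A : Matrix κ ι 𝕜) : MeasurableSet A.oneSparseAliases := by
  classical
  have h : A.oneSparseAliases = ⋃ j, {x | ∃ t, A *ᵥ (x - Pi.single j t) = 0} := by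
    ext x
    simp [Matrix.mem_oneSparseAliases_iff]
  rw [h]
  refine MeasurableSet.iUnion fun j => ?_
  rw [A.setOf_exists_mulVec_sub_single_eq_zero]
  exact ((𝕜 ∙ A *ᵥ Pi.single j 1).closed_of_finiteDimensional.preimage
    (LinearMap.continuous_of_finiteDimensional A.mulVecLin)).measurableSet

end OneSparseAliases

theorem Set.indicator_comp_symm_eq_of_eqOn {α M : Type*} [Zero M] {s : Set α} {π π' : Perm α}
    (h : ∀ x ∈ s, π x = π' x) (f : α → M) : s.indicator f ∘ π.symm = s.indicator f ∘ π'.symm := by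
  have key : ∀ {σ σ' : Perm α}, (∀ x ∈ s, σ x = σ' x) → ∀ j, σ.symm j ∈ s →
      σ'.symm j = σ.symm j :=
    fun {σ σ'} hσ j hj => σ'.symm_apply_eq.mpr (by rw [← hσ _ hj, σ.apply_symm_apply])
  funext j
  by_cases hj : π.symm j ∈ s
  · simp [key h j hj]
  by_cases hj' : π'.symm j ∈ s
  · simp [key (fun x hx => (h x hx).symm) j hj']
  · simp [hj, hj']

theorem Finset.indicator_comp_symm_ne_zero_iff {α M : Type*} [Zero M] {s : Finset α}
    {f : α → M} (hf : ∀ x ∈ s, f x ≠ 0) (π : Perm α) (j : α) :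
    ((s : Set α).indicator f ∘ π.symm) j ≠ 0 ↔ j ∈ s.map π.toEmbedding := by
  by_cases hj : π.symm j ∈ s <;> simp [hj, hf]

theorem Finset.mem_insert_image_symmDiff {α : Type*} [DecidableEq α] {T V R : Finset α}
    (hT : T ⊆ R) (hV : V ⊆ R) {j : α} (h : ∀ x ≠ j, x ∈ T ↔ x ∈ V) :
    T ∈ insert V (R.image fun i => symmDiff V {i}) := by
  by_cases hj : j ∈ T ↔ j ∈ V
  · refine mem_insert.mpr (Or.inl (ext fun x => ?_))
    by_cases hx : x = j
    · exact hx ▸ hj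
    · exact h x hx
  · refine mem_insert_of_mem (mem_image.mpr ⟨j, ?_, ext fun x => ?_⟩)
    · by_cases hjT : j ∈ T
      exacts [hT hjT, hV (by tauto)]
    · by_cases hx : x = j
      · subst hx; simp [mem_symmDiff]; tauto
      · simp [mem_symmDiff, hx, h x hx]

section Perm

variable {α : Type*} [Fintype α] [DecidableEq α] {S₀ S₁ : Finset α}

theorem card_filter_perm_fixing_stabilizing_le (hS : Disjoint S₀ S₁) :
    #{ρ : Perm α | (∀ x ∈ S₀, ρ x = x) ∧ ∀ x, ρ x ∈ S₁ ↔ x ∈ S₁}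
      ≤ (#S₁)! * (Fintype.card α - #S₀ - #S₁)! := by
  set F := ({ρ : Perm α | (∀ x ∈ S₀, ρ x = x) ∧ ∀ x, ρ x ∈ S₁ ↔ x ∈ S₁} : Finset _)
  have hS₀ : ∀ ρ ∈ F, ∀ x, ρ x ∈ S₀ ↔ x ∈ S₀ := fun ρ hρ x => by
    have hfix := (mem_filter.mp hρ).2.1
    exact ⟨fun h => (ρ.injective (hfix _ h)) ▸ h, fun h => (hfix x h).symm ▸ h⟩
  have hrest : ∀ ρ ∈ F, ∀ x, ρ x ∈ (S₀ ∪ S₁)ᶜ ↔ x ∈ (S₀ ∪ S₁)ᶜ := fun ρ hρ x => by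
    simp [hS₀ ρ hρ x, (mem_filter.mp hρ).2.2 x]
  let f : F → Perm S₁ × Perm ↥(S₀ ∪ S₁)ᶜ := fun ρ =>
    (ρ.1.subtypePerm (mem_filter.mp ρ.2).2.2, ρ.1.subtypePerm (hrest ρ.1 ρ.2))
  have hf : Injective f := by
    rintro ⟨ρ, hρ⟩ ⟨ρ', hρ'⟩ h
    simp only [f, Prod.mk.injEq] at h
    refine Subtype.ext (Equiv.ext fun x => ?_)
    by_cases h₀ : x ∈ S₀
    · rw [(mem_filter.mp hρ).2.1 x h₀, (mem_filter.mp hρ').2.1 x h₀]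
    by_cases h₁ : x ∈ S₁
    · simpa using congrArg Subtype.val (Equiv.ext_iff.mp h.1 ⟨x, h₁⟩)
    · simpa using congrArg Subtype.val (Equiv.ext_iff.mp h.2 ⟨x, by simp [h₀, h₁]⟩)
  calc #F = Fintype.card F := (Fintype.card_coe F).symm
    _ ≤ Fintype.card (Perm S₁ × Perm ↥(S₀ ∪ S₁)ᶜ) := Fintype.card_le_of_injective f hf
    _ = (#S₁)! * (Fintype.card α - #S₀ - #S₁)! := by
      rw [Fintype.card_prod, Fintype.card_perm, Fintype.card_perm, Fintype.card_coe,
        Fintype.card_coe, card_compl, card_union_of_disjoint hS, Nat.sub_sub]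

theorem card_filter_perm_eqOn_map_eq_le (hS : Disjoint S₀ S₁) (π₁ : Perm α) :
    #{π : Perm α | (∀ x ∈ S₀, π x = π₁ x) ∧ S₁.map π.toEmbedding = S₁.map π₁.toEmbedding}
      ≤ (#S₁)! * (Fintype.card α - #S₀ - #S₁)! := by
  refine le_trans (card_le_card_of_injOn (π₁⁻¹ * ·) ?_ (fun π _ π' _ h => mul_left_cancel h))
    (card_filter_perm_fixing_stabilizing_le hS)
  intro π hπ
  simp only [coe_filter, mem_univ, true_and, Set.mem_ofPred_eq] at hπ ⊢
  refine ⟨fun x hx => by simp [hπ.1 x hx], fun x => ?_⟩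
  have := congrArg (π x ∈ ·) hπ.2
  simp only [mem_map_equiv, Equiv.symm_apply_apply, eq_iff_iff] at this
  simpa [Perm.mul_apply, ← mem_map_equiv] using this.symm

theorem map_subset_compl_map_of_eqOn (hS : Disjoint S₀ S₁) {π π₀ : Perm α}
    (h : ∀ x ∈ S₀, π x = π₀ x) : S₁.map π.toEmbedding ⊆ (S₀.map π₀.toEmbedding)ᶜ := by
  intro x hx
  simp only [mem_compl, mem_map_equiv] at hx ⊢
  intro hx₀
  have : π.symm x = π₀.symm x := π.symm_apply_eq.mpr (by rw [h _ hx₀, π₀.apply_symm_apply])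
  exact disjoint_left.mp hS hx₀ (this ▸ hx)

end Perm

theorem Nat.factorial_le_add_one_pow_sub_one (k : ℕ) : k ! ≤ (k + 1) ^ (k - 1) := by
  have h := Nat.factorial_mul_descFactorial (Nat.sub_le k 1)
  rw [Nat.factorial_eq_one.mpr (by omega), one_mul] at h
  exact h ▸ (Nat.descFactorial_le_pow k _).trans (Nat.pow_le_pow_left k.le_succ _)

theorem Nat.add_add_one_mul_factorial_mul_factorial_mul_pow_le (n k : ℕ) (hk : 1 ≤ k) :
    (n + k + 1) * k ! * n ! * n ^ (k - 1) ≤ (k + 1) ^ k * (n + k)! := by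
  obtain ⟨j, rfl⟩ : ∃ j, k = j + 1 := ⟨k - 1, by omega⟩
  rw [Nat.add_sub_cancel]
  calc (n + (j + 1) + 1) * (j + 1)! * n ! * n ^ j
      ≤ ((j + 2) * (n + 1)) * (j + 2) ^ j * n ! * (n + 1) ^ j := by
        gcongr
        · nlinarith
        · exact Nat.factorial_le_add_one_pow_sub_one (j + 1)
        · omega
    _ = (j + 1 + 1) ^ (j + 1) * (n ! * (n + 1) ^ (j + 1)) := by ring
    _ ≤ (j + 1 + 1) ^ (j + 1) * (n + (j + 1))! := by
        gcongr; exact Nat.factorial_mul_pow_le_factorial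

section Fiber

variable {K κ α : Type*} [Field K] [Fintype α] [DecidableEq α] {A : Matrix κ α K} {c : ℕ}
  {y : α → K} {S₀ S₁ : Finset α}

theorem mulVec_indicator_comp_symm_sub_single (hS : Disjoint S₀ S₁)
    (hy : support y ⊆ ↑(S₀ ∪ S₁)) {π π₀ : Perm α} (hπ : ∀ x ∈ S₀, π x = π₀ x) {j : α} {t : K}
    (h : A *ᵥ (y ∘ π.symm - Pi.single j t) = 0) :
    A *ᵥ ((S₁ : Set α).indicator y ∘ π.symm - Pi.single j t)
      = -(A *ᵥ ((S₀ : Set α).indicator y ∘ π₀.symm)) := by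
  have hdec : y ∘ π.symm = (S₀ : Set α).indicator y ∘ π₀.symm
      + (S₁ : Set α).indicator y ∘ π.symm := by
    rw [← Set.indicator_comp_symm_eq_of_eqOn hπ]
    conv_lhs => rw [← Set.indicator_eq_self.mpr hy, coe_union,
      Set.indicator_union_of_disjoint (disjoint_coe.mpr hS)]
    rfl
  rw [hdec, add_sub_assoc, Matrix.mulVec_add] at h
  exact eq_neg_of_add_eq_zero_right h

theorem exists_finset_forall_map_mem_of_mem_oneSparseAliases [Nonempty α]
    (hA : A.IsSparseInjective (2 * c)) (hS : Disjoint S₀ S₁) (hS₁ : #S₁ + 1 ≤ c)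
    (hy₁ : ∀ x ∈ S₁, y x ≠ 0) (hy : support y ⊆ ↑(S₀ ∪ S₁)) (π₀ : Perm α) :
    ∃ 𝒯 : Finset (Finset α), #𝒯 ≤ Fintype.card α - #S₀ + 1 ∧
      ∀ π : Perm α, (∀ x ∈ S₀, π x = π₀ x) → y ∘ π.symm ∈ A.oneSparseAliases →
        S₁.map π.toEmbedding ∈ 𝒯 := by
  classical
  set R := (S₀.map π₀.toEmbedding)ᶜ
  set z : Perm α → α → K := fun π => (S₁ : Set α).indicator y ∘ π.symm
  have hz : ∀ π j, z π j ≠ 0 ↔ j ∈ S₁.map π.toEmbedding :=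
    Finset.indicator_comp_symm_ne_zero_iff hy₁
  have hsparse : ∀ π j t, (support (z π - Pi.single j t)).ncard ≤ c := fun π j t => by
    have := ncard_support_sub_single_le (z π) j t
    rw [show support (z π) = S₁.map π.toEmbedding from Set.ext (hz π), Set.ncard_coe_finset,
      card_map] at this
    omega
  by_cases hbad : ∃ π' : Perm α, (∀ x ∈ S₀, π' x = π₀ x) ∧ y ∘ π'.symm ∈ A.oneSparseAliases
  · obtain ⟨π', hπ', hbad'⟩ := hbad
    obtain ⟨j', t', h'⟩ := Matrix.mem_oneSparseAliases_iff.mp hbad'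
    set V := R.filter fun x => (z π' - Pi.single j' t' : α → K) x ≠ 0
    refine ⟨insert V (R.image fun i => symmDiff V {i}), ?_, fun π hπ hbad => ?_⟩
    · have : #R = Fintype.card α - #S₀ := by simp [R, card_compl]
      exact (card_insert_le _ _).trans (by simpa [this] using card_image_le (s := R))
    obtain ⟨j, t, h⟩ := Matrix.mem_oneSparseAliases_iff.mp hbad
    -- both sides are `c`-sparse solutions of `A w = -A u₀`, `u₀` the `S₀`-part of `y ∘ π₀⁻¹`
    have hW : z π - Pi.single j t = z π' - Pi.single j' t' :=
      (two_mul c ▸ hA).eq_of_mulVec_eq (hsparse π j t) (hsparse π' j' t')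
        ((mulVec_indicator_comp_symm_sub_single hS hy hπ h).trans
          (mulVec_indicator_comp_symm_sub_single hS hy hπ' h').symm)
    have hTR := map_subset_compl_map_of_eqOn hS hπ
    refine mem_insert_image_symmDiff hTR (filter_subset _ _) (j := j) fun x hx => ?_
    have hWx := congrFun hW x
    simp only [Pi.sub_apply, Pi.single_eq_of_ne hx, sub_zero] at hWx
    rw [mem_filter, Pi.sub_apply, ← hWx, hz]
    exact ⟨fun h => ⟨hTR h, h⟩, And.right⟩
  · exact ⟨∅, by simp, fun π hπ hπbad => (hbad ⟨π, hπ, hπbad⟩).elim⟩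

open scoped Classical in
theorem card_filter_perm_mem_oneSparseAliases_le [Nonempty α]
    (hA : A.IsSparseInjective (2 * c)) (hS : Disjoint S₀ S₁) (hS₁ : #S₁ + 1 ≤ c)
    (hy₁ : ∀ x ∈ S₁, y x ≠ 0) (hy : support y ⊆ ↑(S₀ ∪ S₁)) :
    #{π : Perm α | y ∘ π.symm ∈ A.oneSparseAliases}
      ≤ (#S₁)! * (Fintype.card α - #S₀ - #S₁)! * (Fintype.card α - #S₀ + 1)
        * (Fintype.card α).descFactorial #S₀ := by
  set ρ : Perm α → (S₀ ↪ α) := fun π => (Embedding.subtype (· ∈ S₀)).trans π.toEmbedding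
  have hρ : ∀ π π', ρ π = ρ π' ↔ ∀ x ∈ S₀, π x = π' x := fun π π' =>
    ⟨fun h x hx => DFunLike.congr_fun h ⟨x, hx⟩, fun h => Embedding.ext fun x => h x x.2⟩
  refine (card_le_mul_card_image_of_maps_to (f := ρ) (t := univ) (fun _ _ => mem_univ _) _
    fun e _ => ?_).trans_eq (by rw [card_univ, Fintype.card_embedding_eq, Fintype.card_coe])
  rcases ({π | y ∘ π.symm ∈ A.oneSparseAliases ∧ ρ π = e} : Finset (Perm α)).eq_empty_or_nonempty
    with hempty | ⟨π₀, hπ₀⟩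
  · simp [filter_filter, hempty]
  simp only [filter_filter, mem_filter, mem_univ, true_and] at hπ₀ ⊢
  obtain ⟨𝒯, h𝒯card, h𝒯⟩ :=
    exists_finset_forall_map_mem_of_mem_oneSparseAliases hA hS hS₁ hy₁ hy π₀
  refine (card_le_mul_card_image_of_maps_to (f := fun π => S₁.map π.toEmbedding) (t := 𝒯)
    (fun π hπ => ?_) _ fun T _ => ?_).trans (Nat.mul_le_mul_left _ h𝒯card)
  · simp only [mem_filter, mem_univ, true_and] at hπ
    exact h𝒯 π ((hρ π π₀).mp (hπ.2.trans hπ₀.2.symm)) hπ.1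
  rcases ({π ∈ {π | y ∘ π.symm ∈ A.oneSparseAliases ∧ ρ π = e} | S₁.map π.toEmbedding = T} :
    Finset (Perm α)).eq_empty_or_nonempty with hempty | ⟨π₁, hπ₁⟩
  · simp [hempty]
  refine (card_le_card fun π hπ => ?_).trans (card_filter_perm_eqOn_map_eq_le hS π₁)
  simp only [mem_filter, mem_univ, true_and] at hπ hπ₁ ⊢
  exact ⟨(hρ π π₁).mp (hπ.1.2.trans hπ₁.1.2.symm), hπ.2.trans hπ₁.2.symm⟩

open scoped Classical in
theorem card_filter_perm_mem_oneSparseAliases_mul_pow_le {r : ℕ} (hc : 2 ≤ c)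
    (hA : A.IsSparseInjective (2 * c)) (hy : (support y).ncard = r) (hcr : c ≤ r + 1) :
    #{π : Perm α | y ∘ π.symm ∈ A.oneSparseAliases} * (Fintype.card α - r) ^ (c - 2)
      ≤ c ^ (c - 1) * (Fintype.card α)! := by
  set S := ({x | y x ≠ 0} : Finset α)
  have hS : #S = r := by rwa [← Set.ncard_coe_finset, coe_filter_univ]
  obtain ⟨S₁, hS₁S, hS₁⟩ := exists_subset_card_eq (show c - 1 ≤ #S by omega)
  obtain ⟨x₁, -⟩ := card_pos.mp (show 0 < #S₁ by omega)
  have : Nonempty α := ⟨x₁⟩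
  have hcount := card_filter_perm_mem_oneSparseAliases_le (S₀ := S \ S₁) hA sdiff_disjoint
    (by omega) (fun x hx => (mem_filter.mp (hS₁S hx)).2)
    (by rw [sdiff_union_of_subset hS₁S]; intro x hx; simpa [S] using hx)
  have hS₀ : #(S \ S₁) = r - (c - 1) := by rw [card_sdiff_of_subset hS₁S, hS, hS₁]
  have hrN : r ≤ Fintype.card α := hS ▸ card_le_univ S
  set N := Fintype.card α
  obtain ⟨k, rfl⟩ : ∃ k, c = k + 1 := ⟨c - 1, by omega⟩
  have hD := Nat.factorial_mul_descFactorial (show #(S \ S₁) ≤ N by omega)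
  rw [show N - #(S \ S₁) = N - r + k by omega] at hD
  rw [show N - #(S \ S₁) - #S₁ = N - r by omega, show N - #(S \ S₁) = N - r + k by omega,
    hS₁, Nat.add_sub_cancel] at hcount
  calc _ ≤ k ! * (N - r)! * (N - r + k + 1) * N.descFactorial #(S \ S₁) * (N - r) ^ (k - 1) :=
        Nat.mul_le_mul_right _ hcount
    _ = (N - r + k + 1) * k ! * (N - r)! * (N - r) ^ (k - 1) * N.descFactorial #(S \ S₁) := by
        ring
    _ ≤ (k + 1) ^ k * (N - r + k)! * N.descFactorial #(S \ S₁) :=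
        Nat.mul_le_mul_right _
          (Nat.add_add_one_mul_factorial_mul_factorial_mul_pow_le _ _ (by omega))
    _ = (k + 1) ^ (k + 1 - 1) * N ! := by rw [mul_assoc, hD, Nat.add_sub_cancel]

end Fiber

open scoped Classical in
theorem measure_le_of_ae_card_filter_mem_le {Ω G : Type*} [MeasurableSpace Ω] [Fintype G]
    [Nonempty G] {μ : Measure Ω} [IsProbabilityMeasure μ] {f : G → Ω → Ω}
    (hf : ∀ g, MeasurePreserving (f g) μ μ) {E : Set Ω} (hE : MeasurableSet E) {p : ℝ≥0∞}
    (h : ∀ᵐ x ∂μ, (#{g | f g x ∈ E} : ℝ≥0∞) ≤ p * Fintype.card G) : μ E ≤ p := by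
  refine (ENNReal.mul_le_mul_iff_right (by simp : (Fintype.card G : ℝ≥0∞) ≠ 0)
    (ENNReal.natCast_ne_top _)).mp ?_
  calc Fintype.card G * μ E = ∑ g, μ (f g ⁻¹' E) := by
        simp [(hf _).measure_preimage hE.nullMeasurableSet]
    _ = ∑ g, ∫⁻ x, (f g ⁻¹' E).indicator 1 x ∂μ := by
        simp [lintegral_indicator_one ((hf _).measurable hE)]
    _ = ∫⁻ x, (#{g | f g x ∈ E} : ℝ≥0∞) ∂μ := by
        rw [← lintegral_finsetSum _ fun g _ => measurable_one.indicator ((hf g).measurable hE)]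
        simp [Set.indicator_apply]
    _ ≤ ∫⁻ _, p * Fintype.card G ∂μ := lintegral_mono_ae h
    _ = Fintype.card G * p := by simp [mul_comm]

theorem stmt2_general (m c r : ℕ) (hc : 2 ≤ c) (hcr : c ≤ r) (hrm : r < m)
    (μ : Measure (Fin m → ℂ)) [IsProbabilityMeasure μ]
    (hperm : ∀ σ : Equiv.Perm (Fin m), Measure.map (fun y => y ∘ σ) μ = μ)
    (hsupp : ∀ᵐ y ∂μ, {j | y j ≠ 0}.ncard = r)
    (A : Matrix (Fin (2 * c)) (Fin m) ℂ)
    (hA : ∀ (τ : Fin (2 * c)) (j : Fin m),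
      A τ j = Complex.exp (-(2 * Real.pi * Complex.I) / m) ^ (-(((τ : ℕ) * (j : ℕ) : ℕ) : ℤ))) :
    μ {y | ∃ y' : Fin m → ℂ, {j | y' j ≠ 0}.ncard ≤ 1 ∧ A.mulVec (y - y') = 0}
      ≤ ENNReal.ofReal ((c : ℝ) * ((c : ℝ) / ((m : ℝ) - (r : ℝ))) ^ (c - 2)) := by
  have : Nonempty (Fin m) := ⟨⟨0, by omega⟩⟩
  refine measure_le_of_ae_card_filter_mem_le (f := fun (π : Perm (Fin m)) y => y ∘ π.symm)
    (fun π => ⟨by fun_prop, hperm π.symm⟩) A.measurableSet_oneSparseAliases ?_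
  filter_upwards [hsupp] with y hy
  have hcount := card_filter_perm_mem_oneSparseAliases_mul_pow_le hc
    (Matrix.isSparseInjective_of_eq_exp_zpow hA) hy (by omega)
  rw [Fintype.card_fin] at hcount
  rw [Fintype.card_perm, Fintype.card_fin, ← Nat.cast_sub hrm.le, ← ENNReal.ofReal_natCast,
    ← ENNReal.ofReal_natCast, ← ENNReal.ofReal_mul (by positivity)]
  refine ENNReal.ofReal_le_ofReal ?_
  rw [div_pow, ← mul_div_assoc, ← pow_succ', show c - 2 + 1 = c - 1 by omega, div_mul_eq_mul_div,
    le_div_iff₀ (pow_pos (Nat.cast_pos.mpr (Nat.sub_pos_of_lt hrm)) _)]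
  exact_mod_cast hcount

/-- If `y ∈ ℂ^m` is drawn from a permutation-invariant distribution with
exactly `r ≥ c` nonzero values, and `A` is the 2c × m matrix of the first 2c rows of
the inverse Fourier matrix, then the probability that some 1-sparse `y'` satisfies
`A(y − y') = 0` is at most `c·(c/(m−r))^{c−2}`. -/
theorem stmt2 (m c r : ℕ) (hm : 0 < m) (hc : 2 ≤ c) (hcr : c ≤ r) (hrm : r < m)
    (μ : Measure (Fin m → ℂ)) [IsProbabilityMeasure μ]
    (hperm : ∀ σ : Equiv.Perm (Fin m), Measure.map (fun y => y ∘ σ) μ = μ)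
    (hsupp : ∀ᵐ y ∂μ, {j | y j ≠ 0}.ncard = r)
    (A : Matrix (Fin (2 * c)) (Fin m) ℂ)
    (hA : ∀ (τ : Fin (2 * c)) (j : Fin m),
      A τ j = Complex.exp (-(2 * Real.pi * Complex.I) / m) ^ (-(((τ : ℕ) * (j : ℕ) : ℕ) : ℤ))) :
    μ {y | ∃ y' : Fin m → ℂ, {j | y' j ≠ 0}.ncard ≤ 1 ∧ A.mulVec (y - y') = 0}
      ≤ ENNReal.ofReal ((c : ℝ) * ((c : ℝ) / ((m : ℝ) - (r : ℝ))) ^ (c - 2)) :=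
  stmt2_general m c r hc hcr hrm μ hperm hsupp A hA
end

section
/- Let v be a vector supported on a uniformly random subset of size c−1 of a set of M coordinates (M = m−r+c−1), and let w be a fixed vector with support size in {c−2, c−1, c}. Then the probability that |supp(v) △ supp(w)| ≤ 1 is less than M / binom(M, c−1). -/
/-- If `S` has one fewer element than `W` and their symmetric difference has at most one
element, then `S` is obtained from `W` by erasing a single element. -/
lemma aux_erase {α : Type*} [DecidableEq α] (S W : Finset α) (h : S.card + 1 = W.card)
    (hsd : (symmDiff S W).card ≤ 1) : ∃ x ∈ W, W.erase x = S := by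
  have hWS : S ⊆ W := by
    intro a ha
    by_contra haW
    have hb : (W \ S).Nonempty := by
      rw [← Finset.card_pos]
      have h1 := Finset.le_card_sdiff S W
      omega
    obtain ⟨b, hb⟩ := hb
    rw [Finset.mem_sdiff] at hb
    have ha' : a ∈ symmDiff S W := Finset.mem_symmDiff.mpr (Or.inl ⟨ha, haW⟩)
    have hb' : b ∈ symmDiff S W := Finset.mem_symmDiff.mpr (Or.inr ⟨hb.1, hb.2⟩)
    have hab : a ≠ b := fun hh => hb.2 (hh ▸ ha)
    have : 1 < (symmDiff S W).card := Finset.one_lt_card.mpr ⟨a, ha', b, hb', hab⟩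
    omega
  have hcard : (W \ S).card = 1 := by
    have h1 := Finset.card_sdiff_of_subset hWS
    have h2 : symmDiff S W = W \ S := symmDiff_of_le hWS
    rw [h2] at hsd
    omega
  obtain ⟨x, hx⟩ := Finset.card_eq_one.mp hcard
  have hxW : x ∈ W ∧ x ∉ S := by
    have : x ∈ W \ S := hx ▸ Finset.mem_singleton_self x
    exact Finset.mem_sdiff.mp this
  refine ⟨x, hxW.1, ?_⟩
  ext a
  simp only [Finset.mem_erase]
  constructor
  · rintro ⟨hax, haW⟩
    by_contra haS
    have : a ∈ W \ S := Finset.mem_sdiff.mpr ⟨haW, haS⟩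
    rw [hx, Finset.mem_singleton] at this
    exact hax this
  · intro haS
    exact ⟨fun hh => hxW.2 (hh ▸ haS), hWS haS⟩

/-- If `S` and `W` have the same cardinality and their symmetric difference has at most one
element, then `S = W`. -/
lemma aux_eq {α : Type*} [DecidableEq α] (S W : Finset α) (h : S.card = W.card)
    (hsd : (symmDiff S W).card ≤ 1) : S = W := by
  by_contra hne
  have hSW : (S \ W).Nonempty := by
    rw [← Finset.card_pos]
    by_contra hcon
    push_neg at hcon
    have : S \ W = ∅ := Finset.card_eq_zero.mp (Nat.le_zero.mp (by omega))
    have hsub : S ⊆ W := Finset.sdiff_eq_empty_iff_subset.mp this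
    exact hne (Finset.eq_of_subset_of_card_le hsub (le_of_eq h.symm))
  have hWS : (W \ S).Nonempty := by
    rw [← Finset.card_pos, ← Finset.card_sdiff_comm h]
    exact Finset.card_pos.mpr hSW
  obtain ⟨a, ha⟩ := hSW
  obtain ⟨b, hb⟩ := hWS
  rw [Finset.mem_sdiff] at ha hb
  have ha' : a ∈ symmDiff S W := Finset.mem_symmDiff.mpr (Or.inl ⟨ha.1, ha.2⟩)
  have hb' : b ∈ symmDiff S W := Finset.mem_symmDiff.mpr (Or.inr ⟨hb.1, hb.2⟩)
  have hab : a ≠ b := fun hh => hb.2 (hh ▸ ha.1)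
  have : 1 < (symmDiff S W).card := Finset.one_lt_card.mpr ⟨a, ha', b, hb', hab⟩
  omega

/-- If `v` is supported on a uniformly random (c−1)-subset of `M = m−r+c−1`
coordinates and `w` is fixed with support size in {c−2, c−1, c}, then the probability that
`|supp(v) △ supp(w)| ≤ 1` is less than `M / binom(M, c−1)`.  The probability is expressed
as the ratio of the number of favorable (c−1)-subsets to the total number `binom(M, c−1)`. -/
theorem stmt3 (M c : ℕ) (hc : 3 ≤ c) (hcM : c < M)
    (W : Finset (Fin M)) (hW : W.card = c - 2 ∨ W.card = c - 1 ∨ W.card = c) :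
    ((((Finset.univ : Finset (Fin M)).powersetCard (c - 1)).filter
        fun S => (symmDiff S W).card ≤ 1).card : ℝ) / (Nat.choose M (c - 1) : ℝ)
      < (M : ℝ) / (Nat.choose M (c - 1) : ℝ) := by
  have hpos : (0:ℝ) < (Nat.choose M (c-1) : ℝ) := by
    exact_mod_cast Nat.choose_pos (by omega)
  rw [div_lt_div_iff_of_pos_right hpos]
  have key : (((Finset.univ : Finset (Fin M)).powersetCard (c - 1)).filter
      (fun S => (symmDiff S W).card ≤ 1)).card < M := by
    rcases hW with h | h | h
    · -- |W| = c - 2 : every favorable S is `insert x W` for some x ∉ W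
      have hsub : ((Finset.univ : Finset (Fin M)).powersetCard (c - 1)).filter
          (fun S => (symmDiff S W).card ≤ 1)
          ⊆ ((Finset.univ : Finset (Fin M)) \ W).image (fun x => insert x W) := by
        intro S hS
        simp only [Finset.mem_filter, Finset.mem_powersetCard] at hS
        obtain ⟨⟨_, hScard⟩, hsd⟩ := hS
        rw [symmDiff_comm] at hsd
        obtain ⟨x, hxS, hxe⟩ := aux_erase W S (by omega) hsd
        rw [Finset.mem_image]
        refine ⟨x, ?_, ?_⟩
        · rw [Finset.mem_sdiff]
          exact ⟨Finset.mem_univ x, by rw [← hxe]; exact Finset.notMem_erase x S⟩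
        · rw [← hxe]
          exact Finset.insert_erase hxS
      calc _ ≤ (((Finset.univ : Finset (Fin M)) \ W).image (fun x => insert x W)).card :=
              Finset.card_le_card hsub
        _ ≤ ((Finset.univ : Finset (Fin M)) \ W).card := Finset.card_image_le
        _ = M - W.card := by rw [Finset.card_sdiff_of_subset (Finset.subset_univ W)]; simp
        _ < M := by omega
    · -- |W| = c - 1 : the only favorable S is W itself
      have hsub : ((Finset.univ : Finset (Fin M)).powersetCard (c - 1)).filter
          (fun S => (symmDiff S W).card ≤ 1) ⊆ {W} := by
        intro S hS
        simp only [Finset.mem_filter, Finset.mem_powersetCard] at hS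
        obtain ⟨⟨_, hScard⟩, hsd⟩ := hS
        rw [Finset.mem_singleton]
        exact aux_eq S W (by omega) hsd
      calc _ ≤ ({W} : Finset (Finset (Fin M))).card := Finset.card_le_card hsub
        _ = 1 := Finset.card_singleton W
        _ < M := by omega
    · -- |W| = c : every favorable S is `W.erase x` for some x ∈ W
      have hsub : ((Finset.univ : Finset (Fin M)).powersetCard (c - 1)).filter
          (fun S => (symmDiff S W).card ≤ 1)
          ⊆ W.image (fun x => W.erase x) := by
        intro S hS
        simp only [Finset.mem_filter, Finset.mem_powersetCard] at hS
        obtain ⟨⟨_, hScard⟩, hsd⟩ := hS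
        obtain ⟨x, hxW, hxe⟩ := aux_erase S W (by omega) hsd
        rw [Finset.mem_image]
        exact ⟨x, hxW, hxe⟩
      calc _ ≤ (W.image (fun x => W.erase x)).card := Finset.card_le_card hsub
        _ ≤ W.card := Finset.card_image_le
        _ < M := by omega
  exact_mod_cast key
end

section
/- Consider a random bipartite-edge model where each of the n = √n × √n grid positions independently contains a nonzero entry with probability a/√n, for a constant 0 < a < 1. Then the probability that there exists a closed 'obstructing cycle' — a sequence of distinct positions p₁, q₁, p₂, q₂, …, p_{t−1}, q_{t−1} with p₁ = p_t, where for each i, p_i and q_i share a column and q_i and p_{i+1} share a row, for some t ≥ 3 — is at most a⁴/(1−a²). -/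
/-!
An active cycle of length `ℓ` is determined by the rows of its `Q`-positions and the columns of
its `P`-positions, so there are at most `s ^ (2ℓ)` of them; each consists of `2ℓ` distinct
positions and is therefore fully active with probability `p ^ (2ℓ)`. As `s * p ≤ a`, the union
bound gives `∑_{ℓ ≥ 2} a ^ (2ℓ) = a⁴ / (1 - a²)`.
-/

open MeasureTheory Finset Function
open scoped ENNReal NNReal

set_option linter.deprecated false

noncomputable abbrev bernoulliPi (ι : Type*) [Fintype ι] (q : ℝ≥0) (hq : q ≤ 1) :
    Measure (ι → Bool) :=
  Measure.pi fun _ : ι => (PMF.bernoulli q hq).toMeasure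

section Bernoulli

variable {ι : Type*} [Fintype ι] (q : ℝ≥0) (hq : q ≤ 1)

lemma bernoulliPi_forall_mem_true (S : Finset ι) :
    bernoulliPi ι q hq {x | ∀ j ∈ S, x j = true} = (q : ℝ≥0∞) ^ #S := by
  classical
  have hset : {x : ι → Bool | ∀ j ∈ S, x j = true}
      = Set.univ.pi fun j => if j ∈ S then ({true} : Set Bool) else Set.univ := by
    ext x
    simp only [Set.mem_setOf_eq, Set.mem_univ_pi]
    refine forall_congr' fun j => ?_
    split_ifs with hj <;> simp [hj]
  rw [hset, Measure.pi_pi]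
  have hfactor (j : ι) : (PMF.bernoulli q hq).toMeasure
      (if j ∈ S then ({true} : Set Bool) else Set.univ) = if j ∈ S then (q : ℝ≥0∞) else 1 := by
    split_ifs
    · simp [PMF.toMeasure_apply_singleton _ _ (measurableSet_singleton _), PMF.bernoulli]
    · exact measure_univ
  simp_rw [hfactor]
  rw [prod_ite_mem, univ_inter, prod_const]

lemma bernoulliPi_exists_injective_all_true_le {κ K : Type*} [Fintype κ] [Fintype K]
    (F : K → κ → ι) :
    bernoulliPi ι q hq {x | ∃ k, Injective (F k) ∧ ∀ j, x (F k j) = true}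
      ≤ Fintype.card K * (q : ℝ≥0∞) ^ Fintype.card κ := by
  classical
  have hpattern (k : K) : bernoulliPi ι q hq {x | Injective (F k) ∧ ∀ j, x (F k j) = true}
      ≤ (q : ℝ≥0∞) ^ Fintype.card κ := by
    by_cases hinj : Injective (F k)
    · calc _ ≤ bernoulliPi ι q hq {x | ∀ i ∈ univ.image (F k), x i = true} :=
            measure_mono fun x hx i hi => by
              obtain ⟨j, -, rfl⟩ := mem_image.1 hi
              exact hx.2 j
        _ = _ := by rw [bernoulliPi_forall_mem_true, card_image_of_injective _ hinj, card_univ]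
    · simp [hinj]
  rw [Set.ofPred_exists]
  calc _ ≤ ∑ k : K, bernoulliPi ι q hq {x | Injective (F k) ∧ ∀ j, x (F k j) = true} :=
        measure_iUnion_fintype_le _ _
    _ ≤ ∑ _k : K, (q : ℝ≥0∞) ^ Fintype.card κ := sum_le_sum fun k _ => hpattern k
    _ = _ := by rw [sum_const, card_univ, nsmul_eq_mul]

end Bernoulli

section Cycles

variable {α β : Type*} {ℓ : ℕ}

def cyclePositions (r : ZMod ℓ → α) (c : ZMod ℓ → β) : ZMod ℓ ⊕ ZMod ℓ → α × β :=
  Sum.elim (fun i => (r (i - 1), c i)) (fun i => (r i, c i))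

def HasActiveCycle (ℓ : ℕ) (x : α × β → Bool) : Prop :=
  ∃ P Q : ZMod ℓ → α × β,
    Injective (Sum.elim P Q) ∧
    (∀ i, (P i).2 = (Q i).2) ∧
    (∀ i, (Q i).1 = (P (i + 1)).1) ∧
    (∀ i, x (P i) = true ∧ x (Q i) = true)

lemma sum_elim_eq_cyclePositions {P Q : ZMod ℓ → α × β} (hcol : ∀ i, (P i).2 = (Q i).2)
    (hrow : ∀ i, (Q i).1 = (P (i + 1)).1) :
    Sum.elim P Q = cyclePositions (fun i => (Q i).1) (fun i => (P i).2) := by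
  funext j
  rcases j with i | i
  · simp [cyclePositions, hrow (i - 1)]
  · simp [cyclePositions, hcol i]

lemma hasActiveCycle_iff {x : α × β → Bool} :
    HasActiveCycle ℓ x ↔ ∃ rc : (ZMod ℓ → α) × (ZMod ℓ → β),
      Injective (cyclePositions rc.1 rc.2) ∧ ∀ j, x (cyclePositions rc.1 rc.2 j) = true := by
  constructor
  · rintro ⟨P, Q, hinj, hcol, hrow, hact⟩
    rw [sum_elim_eq_cyclePositions hcol hrow] at hinj
    refine ⟨(fun i => (Q i).1, fun i => (P i).2), hinj, ?_⟩
    rintro (i | i)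
    · simpa [cyclePositions, hrow (i - 1)] using (hact i).1
    · simpa [cyclePositions, hcol i] using (hact i).2
  · rintro ⟨⟨r, c⟩, hinj, hact⟩
    exact ⟨_, _, hinj, fun _ => rfl, fun i => by simp, fun i => ⟨hact (.inl i), hact (.inr i)⟩⟩

end Cycles

lemma bernoulliPi_hasActiveCycle_le {α β : Type*} [Fintype α] [Fintype β] (q : ℝ≥0)
    (hq : q ≤ 1) (ℓ : ℕ) [NeZero ℓ] :
    bernoulliPi (α × β) q hq {x | HasActiveCycle ℓ x}
      ≤ ((Fintype.card α * Fintype.card β : ℝ≥0∞) * (q : ℝ≥0∞) ^ 2) ^ ℓ := by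
  simp_rw [hasActiveCycle_iff]
  refine (bernoulliPi_exists_injective_all_true_le q hq _).trans_eq ?_
  simp only [Fintype.card_prod, Fintype.card_fun, Fintype.card_sum, ZMod.card]
  push_cast
  ring

lemma tsum_pow_add_two (c : ℝ≥0∞) : ∑' m : ℕ, c ^ (m + 2) = c ^ 2 * (1 - c)⁻¹ := by
  simp_rw [pow_add, mul_comm _ (c ^ 2)]
  rw [ENNReal.tsum_mul_left, ENNReal.tsum_geometric]

lemma tsum_ofReal_pow_add_two {b : ℝ} (hb0 : 0 ≤ b) (hb1 : b < 1) :
    ∑' m : ℕ, ENNReal.ofReal b ^ (m + 2) = ENNReal.ofReal (b ^ 2 / (1 - b)) := by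
  rw [tsum_pow_add_two, ← ENNReal.ofReal_pow hb0, ← ENNReal.ofReal_one,
    ← ENNReal.ofReal_sub _ hb0, ENNReal.ofReal_div_of_pos (by linarith), div_eq_mul_inv]

lemma natCast_mul_ofReal_div_le (s : ℕ) {a : ℝ} (ha : 0 ≤ a) :
    (s : ℝ≥0∞) * ENNReal.ofReal (a / s) ≤ ENNReal.ofReal a := by
  rw [← ENNReal.ofReal_natCast, ← ENNReal.ofReal_mul (Nat.cast_nonneg s)]
  refine ENNReal.ofReal_le_ofReal ?_
  rcases s.eq_zero_or_pos with rfl | hs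
  · simpa using ha
  · rw [mul_div_cancel₀ _ (by positivity)]

/-- In the Bernoulli model where each position of the √n × √n grid (here
`s = √n`) is independently active with probability `a/√n` (0 < a < 1), the probability that
there exists a closed obstructing cycle — distinct positions p₁,q₁,…,p_{t−1},q_{t−1}
(here indexed cyclically by `ZMod ℓ` with `ℓ = t − 1 ≥ 2`) where each pᵢ and qᵢ share a
column and each qᵢ and p_{i+1} share a row, with all positions active — is at most
`a⁴/(1−a²)`. -/
theorem stmt4 (s : ℕ) (a : ℝ) (ha0 : 0 < a) (ha1 : a < 1)
    (p : ℝ≥0∞) (hp : p ≤ 1) (hpa : p = ENNReal.ofReal (a / s)) :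
    (Measure.pi fun _ : Fin s × Fin s => (PMF.bernoulli p.toNNReal
        (by simpa using ENNReal.toNNReal_mono ENNReal.one_ne_top hp)).toMeasure)
      {x : Fin s × Fin s → Bool |
        ∃ ℓ : ℕ, 2 ≤ ℓ ∧
          ∃ P Q : ZMod ℓ → Fin s × Fin s,
            Function.Injective (Sum.elim P Q) ∧
            (∀ i, (P i).2 = (Q i).2) ∧
            (∀ i, (Q i).1 = (P (i + 1)).1) ∧
            (∀ i, x (P i) = true ∧ x (Q i) = true)}
      ≤ ENNReal.ofReal (a ^ 4 / (1 - a ^ 2)) := by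
  have hp_top : p ≠ ⊤ := ne_top_of_le_ne_top ENNReal.one_ne_top hp
  have hgrowth : (Fintype.card (Fin s) * Fintype.card (Fin s) : ℝ≥0∞) * (p.toNNReal : ℝ≥0∞) ^ 2
      ≤ ENNReal.ofReal (a ^ 2) := by
    rw [Fintype.card_fin, ENNReal.coe_toNNReal hp_top, ← sq, ← mul_pow,
      ENNReal.ofReal_pow ha0.le, hpa]
    gcongr
    exact natCast_mul_ofReal_div_le s ha0.le
  calc _ ≤ bernoulliPi (Fin s × Fin s) p.toNNReal _
          (⋃ m : ℕ, {x | HasActiveCycle (m + 2) x}) := by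
        refine measure_mono fun x ⟨ℓ, hℓ, hx⟩ => ?_
        obtain ⟨m, rfl⟩ := Nat.exists_eq_add_of_le' hℓ
        exact Set.mem_iUnion.2 ⟨m, hx⟩
    _ ≤ ∑' m : ℕ, ENNReal.ofReal (a ^ 2) ^ (m + 2) :=
        (measure_iUnion_le _).trans <| ENNReal.tsum_le_tsum fun m =>
          (bernoulliPi_hasActiveCycle_le _ _ _).trans (by gcongr)
    _ = ENNReal.ofReal (a ^ 4 / (1 - a ^ 2)) := by
        rw [tsum_ofReal_pow_add_two (by positivity) (by nlinarith), ← pow_mul]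
end

section
/- Suppose each of the n positions of a √n × √n grid is independently nonzero with probability k/n, the columns are folded into B = Θ(k/log k) bins (each bin containing √n/B columns), and within a bin two nonzero entries (f₁,f₂), (f₁',f₂') 'superimpose' if f₁ = f₁' and f₂ ≡ f₂' mod B. Then the probability that any power of ω receives 3 or more superimposed nonzero entries is at most n·(k/n)·binom(√n/B, 2)·(k/n)² ≤ k³/(2nB²) = O(k log²k / n). -/
/-!
Three nonzero entries in one superposition class means that some 3-subset of the class is
all nonzero, an event of probability `(k/n)³` by independence. A class has at most `s/B`
positions and there are `s·B` classes, so the union bound gives `s·B·binom(s/B, 3)·(k/n)³`,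
and `binom(m, 3) ≤ m·binom(m, 2)` together with `B·(s/B) = s` turns this into the stated bound.
-/

open MeasureTheory Finset
open scoped ENNReal

section BernoulliTrials

variable {ι : Type*}

theorem setOf_le_card_filter_subset_biUnion_pi (s : Finset ι) (r : ℕ) :
    {x : ι → Bool | r ≤ #{i ∈ s | x i = true}} ⊆
      ⋃ T ∈ s.powersetCard r, (T : Set ι).pi fun _ => {true} := by
  intro x hx
  obtain ⟨T, hTs, hTr⟩ := exists_subset_card_eq hx
  refine Set.mem_biUnion (mem_powersetCard.2 ⟨hTs.trans (filter_subset _ _), hTr⟩) ?_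
  intro i hi
  exact (mem_filter.1 (hTs hi)).2

theorem measure_pi_setOf_le_card_filter_le [Fintype ι] (ν : Measure Bool)
    [IsProbabilityMeasure ν] (s : Finset ι) (r : ℕ) :
    Measure.pi (fun _ : ι => ν) {x | r ≤ #{i ∈ s | x i = true}} ≤ (#s).choose r * ν {true} ^ r :=
  calc Measure.pi (fun _ : ι => ν) {x | r ≤ #{i ∈ s | x i = true}}
      ≤ ∑ T ∈ s.powersetCard r, Measure.pi (fun _ : ι => ν) ((T : Set ι).pi fun _ => {true}) :=
        (measure_mono (setOf_le_card_filter_subset_biUnion_pi s r)).trans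
          (measure_biUnion_finset_le _ _)
    _ = (#s).choose r * ν {true} ^ r := by
        rw [sum_congr rfl fun T hT => by
          rw [Measure.pi_pi_finset, prod_const, (mem_powersetCard.1 hT).2]]
        rw [sum_const, card_powersetCard, nsmul_eq_mul]

end BernoulliTrials

theorem card_filter_mod_eq_le {s B : ℕ} (hBs : B ∣ s) (ρ : ℕ) :
    #{j : Fin s | (j : ℕ) % B = ρ} ≤ s / B := by
  have hinj : Set.InjOn (fun j : Fin s => (j : ℕ) / B) {j | (j : ℕ) % B = ρ} := by
    intro i (hi : (i : ℕ) % B = ρ) j (hj : (j : ℕ) % B = ρ) (hij : (i : ℕ) / B = j / B)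
    exact Fin.ext (by rw [← Nat.div_add_mod i B, ← Nat.div_add_mod j B, hi, hj, hij])
  simpa using card_le_card_of_injOn (t := range (s / B)) (fun j : Fin s => (j : ℕ) / B)
    (fun j _ => mem_range.2 (Nat.div_lt_div_of_lt_of_dvd hBs j.2)) (by simpa using hinj)

theorem choose_succ_le_mul_choose (n k : ℕ) : n.choose (k + 1) ≤ n * n.choose k :=
  calc n.choose (k + 1) ≤ n.choose (k + 1) * (k + 1) := Nat.le_mul_of_pos_right _ k.succ_pos
    _ = n.choose k * (n - k) := Nat.choose_succ_right_eq n k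
    _ ≤ n * n.choose k := by rw [mul_comm]; exact Nat.mul_le_mul_right _ (n.sub_le k)

theorem mul_mul_choose_three_le {s B : ℕ} (hBs : B ∣ s) :
    s * B * (s / B).choose 3 ≤ s ^ 2 * (s / B).choose 2 :=
  calc s * B * (s / B).choose 3 ≤ s * B * ((s / B) * (s / B).choose 2) :=
        Nat.mul_le_mul_left _ (choose_succ_le_mul_choose _ 2)
    _ = s * (B * (s / B)) * (s / B).choose 2 := by ring
    _ = s ^ 2 * (s / B).choose 2 := by rw [Nat.mul_div_cancel' hBs, sq]

section SuperpositionClass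

variable {s B : ℕ}

def superpositionClass (s B : ℕ) (f₁ : Fin s) (ρ : ℕ) : Finset (Fin s × Fin s) :=
  ({f₁} : Finset (Fin s)) ×ˢ ({j | (j : ℕ) % B = ρ} : Finset (Fin s))

theorem mem_superpositionClass {f₁ : Fin s} {ρ : ℕ} {q : Fin s × Fin s} :
    q ∈ superpositionClass s B f₁ ρ ↔ q.1 = f₁ ∧ (q.2 : ℕ) % B = ρ := by
  simp only [superpositionClass, mem_product, mem_singleton, mem_filter, mem_univ, true_and]

theorem card_superpositionClass_le (hBs : B ∣ s) (f₁ : Fin s) (ρ : ℕ) :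
    #(superpositionClass s B f₁ ρ) ≤ s / B := by
  simpa [superpositionClass] using card_filter_mod_eq_le hBs ρ

theorem setOf_exists_le_ncard_eq_iUnion (r : ℕ) :
    {x : Fin s × Fin s → Bool | ∃ (f₁ : Fin s) (ρ : Fin B),
      r ≤ {q : Fin s × Fin s | x q = true ∧ q.1 = f₁ ∧ (q.2 : ℕ) % B = (ρ : ℕ)}.ncard} =
      ⋃ c : Fin s × Fin B, {x | r ≤ #{q ∈ superpositionClass s B c.1 c.2 | x q = true}} := by
  have hncard : ∀ (x : Fin s × Fin s → Bool) (f₁ : Fin s) (ρ : ℕ),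
      {q : Fin s × Fin s | x q = true ∧ q.1 = f₁ ∧ (q.2 : ℕ) % B = ρ}.ncard =
        #{q ∈ superpositionClass s B f₁ ρ | x q = true} := by
    intro x f₁ ρ
    rw [← Set.ncard_coe_finset]
    congr 1
    ext q
    simp [mem_superpositionClass, and_comm]
  ext x
  simp [hncard]

end SuperpositionClass

/-- Each of the `n = s²` positions of an `s × s` grid is independently
nonzero with probability `k/n`; columns are folded into `B` bins (`B ∣ s`).  Two entries
`(f₁,f₂)`, `(f₁',f₂')` superimpose if `f₁ = f₁'` and `f₂ ≡ f₂' (mod B)`; each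
superposition group (a fixed row and a fixed residue mod `B`) has `s/B` positions.
The probability that any group receives 3 or more nonzero entries is at most
`n·(k/n)·binom(s/B, 2)·(k/n)²`. -/
theorem stmt7 (s B k : ℕ) (hBs : B ∣ s)
    (p : ℝ≥0∞) (hp : p ≤ 1) (hpv : p = ENNReal.ofReal ((k : ℝ) / (s : ℝ) ^ 2)) :
    (Measure.pi fun _ : Fin s × Fin s => (PMF.bernoulli p.toNNReal (by simpa using ENNReal.toNNReal_mono ENNReal.one_ne_top hp)).toMeasure)
      {x : Fin s × Fin s → Bool |
        ∃ (f₁ : Fin s) (ρ : Fin B),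
          3 ≤ {q : Fin s × Fin s | x q = true ∧ q.1 = f₁ ∧ (q.2 : ℕ) % B = (ρ : ℕ)}.ncard}
      ≤ ENNReal.ofReal (((s : ℝ) ^ 2) * ((k : ℝ) / (s : ℝ) ^ 2) *
          (Nat.choose (s / B) 2 : ℝ) * ((k : ℝ) / (s : ℝ) ^ 2) ^ 2) := by
  set ν := (PMF.bernoulli p.toNNReal
    (by simpa using ENNReal.toNNReal_mono ENNReal.one_ne_top hp)).toMeasure
  have hν : ν {true} = p := by
    rw [PMF.toMeasure_apply_singleton _ _ (measurableSet_singleton _)]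
    exact ENNReal.coe_toNNReal (ne_top_of_le_ne_top ENNReal.one_ne_top hp)
  have hc : 0 ≤ (k : ℝ) / (s : ℝ) ^ 2 := by positivity
  rw [setOf_exists_le_ncard_eq_iUnion]
  calc _ ≤ ∑ c : Fin s × Fin B,
        Measure.pi (fun _ => ν) {x | 3 ≤ #{q ∈ superpositionClass s B c.1 c.2 | x q = true}} :=
        measure_iUnion_fintype_le _ _
    _ ≤ ∑ _c : Fin s × Fin B, ((s / B).choose 3 : ℝ≥0∞) * p ^ 3 := by
        gcongr with c
        refine (measure_pi_setOf_le_card_filter_le ν _ 3).trans ?_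
        rw [hν]
        gcongr
        exact card_superpositionClass_le hBs c.1 c.2
    _ = ((s * B * (s / B).choose 3 : ℕ) : ℝ≥0∞) * p ^ 3 := by simp [mul_assoc]
    _ ≤ _ := by
        rw [hpv, ← ENNReal.ofReal_pow hc, ← ENNReal.ofReal_natCast,
          ← ENNReal.ofReal_mul (Nat.cast_nonneg _)]
        refine ENNReal.ofReal_le_ofReal ?_
        calc ((s * B * (s / B).choose 3 : ℕ) : ℝ) * ((k : ℝ) / (s : ℝ) ^ 2) ^ 3
            ≤ ((s ^ 2 * (s / B).choose 2 : ℕ) : ℝ) * ((k : ℝ) / (s : ℝ) ^ 2) ^ 3 := by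
              gcongr ?_ * _; exact_mod_cast mul_mul_choose_three_le hBs
          _ = _ := by push_cast; ring
end

section
/- Let x ∈ ℂ^{√n × √n} and let x̂ denote its 2D DFT. Fix shifts (τ_r, τ_c) ∈ [√n]² and divisors B_r, B_c of √n, and define y ∈ ℂ^{B_r × B_c} by y_{i,j} = x_{i(√n/B_r)+τ_r, j(√n/B_c)+τ_c}. Then the 2D DFT ŷ of y satisfies ŷ_{i,j} = Σ_{l ∈ [√n/B_r]} Σ_{m ∈ [√n/B_c]} x̂_{lB_r+i, mB_c+j} · ω^{−τ_r(i+lB_r) − τ_c(j+mB_c)}, where ω = e^{−2πi/√n}. -/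
/-!
The DFT of the shifted signal `v ↦ f ((v + τ) % s)` is that of `f` times the phase `ω⁻¹ ^ (τ k)`.
Summing the DFT of a signal `g` over the frequencies `l B + i` (`l < q`) that alias to `i`, and
writing time as `v = a q + r` with `r < q`, the sums `∑ l, (ω ^ B) ^ (r l)` vanish unless `r = 0`,
where they equal `q`: what is left is `q` times the length-`B` DFT, with root `ω ^ q`, of the
decimated signal `a ↦ g (a q)`. The two-dimensional identity is the one-dimensional one in each
coordinate, and the normalizations `1 / s` and `s / (B_r B_c)` agree since `s² = B_r q_r B_c q_c`.
-/

open Finset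

theorem sum_range_add_mod {M : Type*} [AddCommMonoid M] (s τ : ℕ) (F : ℕ → M) :
    ∑ v ∈ range s, F ((v + τ) % s) = ∑ u ∈ range s, F u := by
  rcases Nat.eq_zero_or_pos s with rfl | hs
  · simp
  have := NeZero.of_pos hs
  rw [← Fin.sum_univ_eq_sum_range (fun v => F ((v + τ) % s)), ← Fin.sum_univ_eq_sum_range]
  exact Fintype.sum_equiv (Equiv.addRight (Fin.ofNat s τ)) _ _
    fun v => by simp [Fin.val_add]

theorem sum_range_mul {M : Type*} [AddCommMonoid M] (B q : ℕ) (G : ℕ → M) :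
    ∑ v ∈ range (B * q), G v = ∑ a ∈ range B, ∑ r ∈ range q, G (a * q + r) := by
  induction B with
  | zero => simp
  | succ B ih => rw [Nat.succ_mul, sum_range_add, ih, sum_range_succ]

theorem IsPrimitiveRoot.sum_pow_mul_eq_ite {K : Type*} [CommRing K] [IsDomain K] {ζ : K} {q : ℕ}
    (hζ : IsPrimitiveRoot ζ q) {r : ℕ} (hr : r < q) :
    ∑ l ∈ range q, ζ ^ (r * l) = if r = 0 then (q : K) else 0 := by
  split_ifs with h
  · simp [h]
  have hne : ζ ^ r ≠ 1 := fun h1 =>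
    h (Nat.eq_zero_of_dvd_of_lt ((hζ.pow_eq_one_iff_dvd r).1 h1) hr)
  have hsum := geom_sum_mul (ζ ^ r) q
  rw [← pow_mul, mul_comm r q, pow_mul, hζ.pow_eq_one, one_pow, sub_self] at hsum
  simpa [pow_mul] using (mul_eq_zero.1 hsum).resolve_right (sub_ne_zero.2 hne)

theorem IsPrimitiveRoot.pow_eq_pow_of_modEq {M : Type*} [CommMonoid M] {ζ : M} {s a b : ℕ}
    (hζ : IsPrimitiveRoot ζ s) (h : a ≡ b [MOD s]) : ζ ^ a = ζ ^ b := by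
  rw [← pow_mod_orderOf, ← hζ.eq_orderOf, h, hζ.eq_orderOf, pow_mod_orderOf]

section DFT

variable {K : Type*} [CommSemiring K]

def dft (ζ : K) (N : ℕ) (f : ℕ → K) (k : ℕ) : K :=
  ∑ u ∈ range N, ζ ^ (k * u) * f u

def dft₂ (ζ ζ' : K) (M N : ℕ) (x : ℕ → ℕ → K) (k k' : ℕ) : K :=
  ∑ u ∈ range M, ∑ v ∈ range N, ζ ^ (k * u) * ζ' ^ (k' * v) * x u v

theorem dft₂_eq_dft_dft (ζ ζ' : K) (M N : ℕ) (x : ℕ → ℕ → K) (k k' : ℕ) :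
    dft₂ ζ ζ' M N x k k' = dft ζ M (fun u => dft ζ' N (x u) k') k := by
  simp only [dft₂, dft, mul_sum, mul_assoc]

theorem sum_mul_dft {ι : Type*} (t : Finset ι) (c : ι → K) (ζ : K) (N : ℕ) (g : ι → ℕ → K)
    (k : ℕ) :
    ∑ m ∈ t, c m * dft ζ N (g m) k = dft ζ N (fun u => ∑ m ∈ t, c m * g m u) k := by
  simp only [dft, mul_sum]
  rw [sum_comm]
  exact sum_congr rfl fun u _ => sum_congr rfl fun m _ => mul_left_comm _ _ _

end DFT

section Aliasing

variable {K : Type*} [Field K] {ω : K} {s : ℕ}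

theorem dft_comp_add_mod (hω : IsPrimitiveRoot ω s) (τ k : ℕ) (f : ℕ → K) :
    dft ω s (fun v => f ((v + τ) % s)) k = ω⁻¹ ^ (τ * k) * dft ω s f k := by
  rcases Nat.eq_zero_or_pos s with rfl | hs
  · simp [dft]
  rw [dft, dft, ← sum_range_add_mod s τ (fun u => ω ^ (k * u) * f u), mul_sum]
  refine sum_congr rfl fun v _ => ?_
  have hrot : ω ^ (k * ((v + τ) % s)) = ω ^ (k * v) * ω ^ (τ * k) := by
    rw [← pow_add, hω.pow_eq_pow_of_modEq ((Nat.mod_modEq _ _).mul_left k)]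
    ring_nf
  rw [hrot, inv_pow]
  field_simp [hω.ne_zero hs.ne']

theorem sum_dft_add_mul {B q : ℕ} (hBq : B * q = s) (hω : IsPrimitiveRoot ω s) (g : ℕ → K)
    (i : ℕ) :
    ∑ l ∈ range q, dft ω s g (l * B + i) = q * dft (ω ^ q) B (fun a => g (a * q)) i := by
  subst hBq
  rcases Nat.eq_zero_or_pos (B * q) with h0 | hs
  · rcases mul_eq_zero.1 h0 with rfl | rfl <;> simp [dft]
  have hωB : IsPrimitiveRoot (ω ^ B) q := hω.pow hs rfl
  calc ∑ l ∈ range q, dft ω (B * q) g (l * B + i)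
      = ∑ l ∈ range q, ∑ a ∈ range B, ∑ r ∈ range q,
          ω ^ ((l * B + i) * (a * q + r)) * g (a * q + r) := by
        simp only [dft, sum_range_mul]
    _ = ∑ a ∈ range B, ∑ r ∈ range q,
          (∑ l ∈ range q, (ω ^ B) ^ (r * l)) * (ω ^ (i * (a * q + r)) * g (a * q + r)) := by
        rw [sum_comm]
        refine sum_congr rfl fun a _ => ?_
        rw [sum_comm]
        refine sum_congr rfl fun r _ => ?_
        rw [sum_mul]
        refine sum_congr rfl fun l _ => ?_
        have hexp : (l * B + i) * (a * q + r)
            = B * q * (l * a) + (B * (r * l) + i * (a * q + r)) := by ring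
        rw [hexp, pow_add, pow_mul, hω.pow_eq_one, one_pow, one_mul, pow_add, pow_mul, mul_assoc]
    _ = ∑ a ∈ range B, q * (ω ^ (i * (a * q)) * g (a * q)) := by
        refine sum_congr rfl fun a _ => ?_
        rw [sum_congr rfl fun r hr => by rw [hωB.sum_pow_mul_eq_ite (mem_range.1 hr)]]
        simp [ite_mul, Nat.pos_of_mul_pos_left hs]
    _ = q * dft (ω ^ q) B (fun a => g (a * q)) i := by
        rw [dft, mul_sum]
        refine sum_congr rfl fun a _ => ?_
        rw [← pow_mul]
        ring_nf

theorem sum_inv_pow_mul_dft {B q : ℕ} (hBq : B * q = s) (hω : IsPrimitiveRoot ω s) (τ i : ℕ)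
    (f : ℕ → K) :
    ∑ l ∈ range q, ω⁻¹ ^ (τ * (i + l * B)) * dft ω s f (l * B + i)
      = q * dft (ω ^ q) B (fun a => f ((a * q + τ) % s)) i := by
  simp only [add_comm i, ← dft_comp_add_mod hω]
  exact sum_dft_add_mul hBq hω _ i

theorem sum_sum_inv_pow_mul_dft₂ {Br qr Bc qc : ℕ} (hBqr : Br * qr = s) (hBqc : Bc * qc = s)
    (hω : IsPrimitiveRoot ω s) (τr τc i j : ℕ) (x : ℕ → ℕ → K) :
    ∑ l ∈ range qr, ∑ m ∈ range qc, ω⁻¹ ^ (τr * (i + l * Br)) * ω⁻¹ ^ (τc * (j + m * Bc)) *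
        dft₂ ω ω s s x (l * Br + i) (m * Bc + j)
      = qr * qc * dft₂ (ω ^ qr) (ω ^ qc) Br Bc
          (fun a b => x ((a * qr + τr) % s) ((b * qc + τc) % s)) i j := by
  calc _ = ∑ l ∈ range qr, ω⁻¹ ^ (τr * (i + l * Br)) * dft ω s
          (fun u => ∑ m ∈ range qc, ω⁻¹ ^ (τc * (j + m * Bc)) * dft ω s (x u) (m * Bc + j))
          (l * Br + i) := by
        simp only [dft₂_eq_dft_dft, ← sum_mul_dft, mul_sum, mul_assoc]
    _ = ∑ l ∈ range qr, ω⁻¹ ^ (τr * (i + l * Br)) * dft ω s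
          (fun u => qc * dft (ω ^ qc) Bc (fun b => x u ((b * qc + τc) % s)) j) (l * Br + i) := by
        simp only [sum_inv_pow_mul_dft hBqc hω]
    _ = qr * dft (ω ^ qr) Br (fun a => qc * dft (ω ^ qc) Bc
          (fun b => x ((a * qr + τr) % s) ((b * qc + τc) % s)) j) i :=
        sum_inv_pow_mul_dft hBqr hω τr i _
    _ = _ := by
        rw [dft₂_eq_dft_dft]
        simp only [dft, mul_sum]
        exact sum_congr rfl fun a _ => sum_congr rfl fun b _ => by ring

end Aliasing

theorem Complex.isPrimitiveRoot_exp_neg (n : ℕ) (h0 : n ≠ 0) :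
    IsPrimitiveRoot (Complex.exp (-(2 * Real.pi * Complex.I) / n)) n := by
  simpa [neg_div, Complex.exp_neg] using (Complex.isPrimitiveRoot_exp n h0).inv

theorem Complex.exp_neg_two_pi_I_div_pow {B q s : ℕ} (hBq : B * q = s) (hs : s ≠ 0) :
    Complex.exp (-(2 * Real.pi * Complex.I) / s) ^ q
      = Complex.exp (-(2 * Real.pi * Complex.I) / B) := by
  subst hBq
  obtain ⟨hB, hq⟩ := mul_ne_zero_iff.1 hs
  rw [← Complex.exp_nat_mul]
  congr 1
  push_cast
  field_simp

theorem div_mul_eq_one_div_mul_of_mul_eq {K : Type*} [Field K] {a b c d s : K} (hab : a * b = s)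
    (hcd : c * d = s) (hs : s ≠ 0) : s / (a * c) = 1 / s * (b * d) := by
  have ha : a ≠ 0 := left_ne_zero_of_mul (hab ▸ hs)
  have hc : c ≠ 0 := left_ne_zero_of_mul (hcd ▸ hs)
  field_simp
  linear_combination -s * hcd - c * d * hab

theorem stmt10_general (s Br Bc τr τc : ℕ) (hs : 0 < s)
    (hBrs : Br ∣ s) (hBcs : Bc ∣ s)
    (ω ωr ωc : ℂ)
    (hω : ω = Complex.exp (-(2 * Real.pi * Complex.I) / s))
    (hωr : ωr = Complex.exp (-(2 * Real.pi * Complex.I) / Br))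
    (hωc : ωc = Complex.exp (-(2 * Real.pi * Complex.I) / Bc))
    (x xhat y yhat : ℕ → ℕ → ℂ)
    (hxhat : ∀ i j, xhat i j =
      (1 / (s : ℂ)) * ∑ l ∈ range s, ∑ m ∈ range s, ω ^ (i * l + j * m) * x l m)
    (hy : ∀ i j, y i j = x ((i * (s / Br) + τr) % s) ((j * (s / Bc) + τc) % s))
    (hyhat : ∀ i j, yhat i j =
      ((s : ℂ) / ((Br : ℂ) * (Bc : ℂ))) *
        ∑ l ∈ range Br, ∑ m ∈ range Bc, ωr ^ (i * l) * ωc ^ (j * m) * y l m)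
    (i j : ℕ) :
    yhat i j = ∑ l ∈ range (s / Br), ∑ m ∈ range (s / Bc),
      xhat (l * Br + i) (m * Bc + j) *
        ω ^ (-(((τr * (i + l * Br) + τc * (j + m * Bc)) : ℕ) : ℤ)) := by
  set qr := s / Br
  set qc := s / Bc
  have hBqr : Br * qr = s := Nat.mul_div_cancel' hBrs
  have hBqc : Bc * qc = s := Nat.mul_div_cancel' hBcs
  have hprim : IsPrimitiveRoot ω s := hω ▸ Complex.isPrimitiveRoot_exp_neg s hs.ne'
  have hωr' : ωr = ω ^ qr := by rw [hωr, hω, Complex.exp_neg_two_pi_I_div_pow hBqr hs.ne']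
  have hωc' : ωc = ω ^ qc := by rw [hωc, hω, Complex.exp_neg_two_pi_I_div_pow hBqc hs.ne']
  have hscale : (s : ℂ) / (Br * Bc) = 1 / s * (qr * qc) :=
    div_mul_eq_one_div_mul_of_mul_eq (by exact_mod_cast hBqr) (by exact_mod_cast hBqc)
      (by exact_mod_cast hs.ne')
  calc yhat i j
      = 1 / s * (qr * qc * dft₂ (ω ^ qr) (ω ^ qc) Br Bc
          (fun a b => x ((a * qr + τr) % s) ((b * qc + τc) % s)) i j) := by
        rw [hyhat, hscale, hωr', hωc', mul_assoc]
        simp only [hy, dft₂]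
    _ = _ := by
        rw [← sum_sum_inv_pow_mul_dft₂ hBqr hBqc hprim, mul_sum]
        refine sum_congr rfl fun l _ => ?_
        rw [mul_sum]
        refine sum_congr rfl fun m _ => ?_
        rw [hxhat, zpow_neg, zpow_natCast, pow_add, mul_inv, ← inv_pow, ← inv_pow, dft₂]
        simp only [pow_add]
        ring

/-- Subsampling an `s × s` signal (`s = √n`) in the time domain with shifts
`(τr, τc)` and ratios `(s/Br, s/Bc)` folds (aliases) the spectrum: if
`y i j = x (i(s/Br)+τr) (j(s/Bc)+τc)` (indices mod `s`), then the 2D DFT `ŷ` of `y`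
(computed with the appropriate normalization) satisfies
`ŷ i j = Σ_{l<s/Br} Σ_{m<s/Bc} x̂ (lBr+i) (mBc+j) · ω^{−τr(i+lBr)−τc(j+mBc)}`,
where `ω = e^{−2πi/s}` and `x̂` is the 2D DFT of `x` normalized by `1/√n = 1/s`. -/
theorem stmt10 (s Br Bc τr τc : ℕ) (hs : 0 < s) (hBr : 0 < Br) (hBc : 0 < Bc)
    (hBrs : Br ∣ s) (hBcs : Bc ∣ s) (hτr : τr < s) (hτc : τc < s)
    (ω ωr ωc : ℂ)
    (hω : ω = Complex.exp (-(2 * Real.pi * Complex.I) / s))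
    (hωr : ωr = Complex.exp (-(2 * Real.pi * Complex.I) / Br))
    (hωc : ωc = Complex.exp (-(2 * Real.pi * Complex.I) / Bc))
    (x xhat y yhat : ℕ → ℕ → ℂ)
    (hxhat : ∀ i j, xhat i j =
      (1 / (s : ℂ)) * ∑ l ∈ range s, ∑ m ∈ range s, ω ^ (i * l + j * m) * x l m)
    (hy : ∀ i j, y i j = x ((i * (s / Br) + τr) % s) ((j * (s / Bc) + τc) % s))
    (hyhat : ∀ i j, yhat i j =
      ((s : ℂ) / ((Br : ℂ) * (Bc : ℂ))) *
        ∑ l ∈ range Br, ∑ m ∈ range Bc, ωr ^ (i * l) * ωc ^ (j * m) * y l m)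
    (i j : ℕ) (hi : i < Br) (hj : j < Bc) :
    yhat i j = ∑ l ∈ range (s / Br), ∑ m ∈ range (s / Bc),
      xhat (l * Br + i) (m * Bc + j) *
        ω ^ (-(((τr * (i + l * Br) + τc * (j + m * Bc)) : ℕ) : ℤ)) :=
  stmt10_general s Br Bc τr τc hs hBrs hBcs ω ωr ωc hω hωr hωc x xhat y yhat hxhat hy hyhat i j
end

section
/- Let M be the set of 2×2 integer matrices over ℤ_{√n} with odd determinant, and let v ∈ [√n]² be nonzero, where √n is a power of 2. Then for M chosen uniformly from 𝓜, Pr[ Mv ∈ [−C, C]² (mod √n) ] ≤ O(C²/n). More precisely, if g = gcd-power-of-2 of v (the largest power of 2 dividing both coordinates), then Mv is uniform on S = {u ∈ [√n]² : largest power of 2 dividing both coordinates of u is g}, |S ∩ [−C,C]²| ≤ 8(C/g)², |S| = (3/4)n/g², and the probability is at most (32/3)·C²/n. -/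
/-!
Write `v = 2^k c` with `c` unimodular and pick `A ∈ GL₂` with first column `c`; then `M ↦ M A`
shows that `M v` is distributed as `2^k` times the first column of a uniform `M ∈ GL₂`. Over any
finite commutative ring, the matrices with unit determinant and first column `c` number
`|Rˣ| · |R|` when `c` is unimodular and none otherwise, so that column is uniform on the
`(3/4) · 4^w` unimodular vectors of `ZMod (2^w)`. Finally, a unimodular `c` with `2^k c` in the
box `[-C, C]²` has the form `a + 2^(w-k) j` with `a ∈ [-C/2^k, C/2^k]²` not both even and
`j ∈ [0, 2^k)²`, which leaves at most `8 (C/2^k)² · 4^k ≤ 8 C²` choices.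
-/

open Finset Matrix

theorem IsUnit.isCoprime_left {R : Type*} [CommRing R] {x : R} (h : IsUnit x) (y : R) :
    IsCoprime x y :=
  ⟨↑h.unit⁻¹, 0, by simp⟩

namespace Matrix

section CommRing

variable {R : Type*} [CommRing R]

theorem isCoprime_of_isUnit_det_fin_two {M : Matrix (Fin 2) (Fin 2) R} (h : IsUnit M.det) :
    IsCoprime (M 0 0) (M 1 0) := by
  obtain ⟨u, hu⟩ := h
  rw [det_fin_two] at hu
  exact ⟨↑u⁻¹ * M 1 1, -(↑u⁻¹ * M 0 1), by linear_combination (-(↑u⁻¹ : R)) * hu + u.inv_mul⟩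

theorem exists_isUnit_det_mulVec_single_eq_smul {c : Fin 2 → R} (hc : IsCoprime (c 0) (c 1))
    (t : R) : ∃ A : Matrix (Fin 2) (Fin 2) R, IsUnit A.det ∧ A *ᵥ Pi.single 0 t = t • c := by
  obtain ⟨a, b, hab⟩ := hc
  refine ⟨!![c 0, -b; c 1, a], ?_, ?_⟩
  · rw [det_fin_two_of, show c 0 * a - -b * c 1 = 1 by linear_combination hab]
    exact isUnit_one
  · ext i
    fin_cases i <;> simp [mul_comm]

variable [Fintype R] [DecidableEq R]

open scoped Classical

theorem card_isUnit_sub_mul_of_isCoprime {a b : R} (h : IsCoprime a b) :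
    #{p : R × R | IsUnit (a * p.2 - p.1 * b)} = #{x : R | IsUnit x} * Fintype.card R := by
  obtain ⟨u, v, huv⟩ := h
  -- `p ↦ (a p₂ - p₁ b, u p₁ + v p₂)` is linear of determinant `-(u a + v b) = -1`.
  calc #{p : R × R | IsUnit (a * p.2 - p.1 * b)} = #{q : R × R | IsUnit q.1} := by
        refine card_nbij' (fun p => (a * p.2 - p.1 * b, u * p.1 + v * p.2))
          (fun q => (a * q.2 - v * q.1, b * q.2 + u * q.1)) ?_ ?_ ?_ ?_
        · intro p hp
          simpa using hp
        · intro q hq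
          simp only [coe_filter, mem_univ, true_and, Set.mem_ofPred_eq] at hq ⊢
          convert hq using 1
          linear_combination q.1 * huv
        · intro p _
          ext
          · linear_combination p.1 * huv
          · linear_combination p.2 * huv
        · intro q _
          ext
          · linear_combination q.1 * huv
          · linear_combination q.2 * huv
    _ = #{x : R | IsUnit x} * Fintype.card R := by
        rw [← univ_product_univ, filter_product_left (fun x : R => IsUnit x), card_product,
          card_univ]

theorem card_isUnit_det_and_col_zero_eq (c : Fin 2 → R) :
    #{M : Matrix (Fin 2) (Fin 2) R | IsUnit M.det ∧ M.col 0 = c} =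
      if IsCoprime (c 0) (c 1) then #{x : R | IsUnit x} * Fintype.card R else 0 := by
  split_ifs with hc
  · rw [← card_isUnit_sub_mul_of_isCoprime hc]
    refine card_nbij' (fun M => (M 0 1, M 1 1)) (fun p => !![c 0, p.1; c 1, p.2]) ?_ ?_ ?_ ?_
    · intro M hM
      obtain ⟨-, hdet, rfl⟩ := mem_filter.mp hM
      exact mem_filter.mpr ⟨mem_univ _, by simpa [det_fin_two] using hdet⟩
    · intro p hp
      refine mem_filter.mpr ⟨mem_univ _, ?_, ?_⟩
      · simpa [det_fin_two_of] using (mem_filter.mp hp).2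
      · ext i; fin_cases i <;> rfl
    · intro M hM
      obtain ⟨-, -, rfl⟩ := mem_filter.mp hM
      exact (eta_fin_two M).symm
    · intro p _
      rfl
  · refine card_eq_zero.mpr (filter_eq_empty_iff.mpr ?_)
    rintro M - ⟨hdet, rfl⟩
    exact hc (isCoprime_of_isUnit_det_fin_two hdet)

theorem card_isUnit_det_and_col_zero (P : (Fin 2 → R) → Prop) [DecidablePred P] :
    #{M : Matrix (Fin 2) (Fin 2) R | IsUnit M.det ∧ P (M.col 0)} =
      #{x : R | IsUnit x} * Fintype.card R * #{c : Fin 2 → R | IsCoprime (c 0) (c 1) ∧ P c} := by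
  have hfib := card_eq_sum_card_fiberwise (f := fun M => M.col 0) (t := {c | P c})
    (s := {M : Matrix (Fin 2) (Fin 2) R | IsUnit M.det ∧ P (M.col 0)})
    (fun M hM => by simpa using (mem_filter.mp hM).2.2)
  have hterm : ∀ c ∈ ({c | P c} : Finset (Fin 2 → R)),
      #{M ∈ {M : Matrix (Fin 2) (Fin 2) R | IsUnit M.det ∧ P (M.col 0)} | M.col 0 = c} =
        if IsCoprime (c 0) (c 1) then #{x : R | IsUnit x} * Fintype.card R else 0 := by
    intro c hc
    rw [← card_isUnit_det_and_col_zero_eq, filter_filter]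
    refine congrArg card (filter_congr fun M _ => ?_)
    constructor
    · exact fun h => ⟨h.1.1, h.2⟩
    · rintro ⟨h, rfl⟩
      exact ⟨⟨h, (mem_filter.mp hc).2⟩, rfl⟩
  rw [hfib, sum_congr rfl hterm, sum_ite, sum_const_zero, add_zero, sum_const, smul_eq_mul,
    filter_filter, mul_comm]
  simp only [and_comm]

theorem card_isUnit_det_fin_two :
    #{M : Matrix (Fin 2) (Fin 2) R | IsUnit M.det} =
      #{x : R | IsUnit x} * Fintype.card R * #{c : Fin 2 → R | IsCoprime (c 0) (c 1)} := by
  simpa using card_isUnit_det_and_col_zero (R := R) (fun _ => True)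

theorem card_isUnit_det_and_mulVec_mulVec {n : Type*} [Fintype n] [DecidableEq n]
    {A : Matrix n n R} (hA : IsUnit A.det) (P : (n → R) → Prop) [DecidablePred P]
    (x : n → R) :
    #{M : Matrix n n R | IsUnit M.det ∧ P (M *ᵥ (A *ᵥ x))} =
      #{M : Matrix n n R | IsUnit M.det ∧ P (M *ᵥ x)} := by
  refine card_nbij' (· * A) (· * A⁻¹) ?_ ?_ ?_ ?_
  · intro M hM
    obtain ⟨-, hdet, hP⟩ := mem_filter.mp hM
    refine mem_filter.mpr ⟨mem_univ _, ?_, ?_⟩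
    · rw [det_mul]; exact hdet.mul hA
    · rwa [← mulVec_mulVec]
  · intro M hM
    obtain ⟨-, hdet, hP⟩ := mem_filter.mp hM
    refine mem_filter.mpr ⟨mem_univ _, ?_, ?_⟩
    · rw [det_mul]; exact hdet.mul (isUnit_nonsing_inv_det A hA)
    · rwa [mulVec_mulVec, nonsing_inv_mul_cancel_right A M hA]
  · intro M _
    exact mul_nonsing_inv_cancel_right A M hA
  · intro M _
    exact nonsing_inv_mul_cancel_right A M hA

theorem card_isUnit_det_and_mulVec_smul {c : Fin 2 → R} (hc : IsCoprime (c 0) (c 1)) (t : R)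
    (P : (Fin 2 → R) → Prop) [DecidablePred P] :
    #{M : Matrix (Fin 2) (Fin 2) R | IsUnit M.det ∧ P (M *ᵥ (t • c))} =
      #{x : R | IsUnit x} * Fintype.card R *
        #{c' : Fin 2 → R | IsCoprime (c' 0) (c' 1) ∧ P (t • c')} := by
  obtain ⟨A, hA, hAc⟩ := exists_isUnit_det_mulVec_single_eq_smul hc t
  rw [← hAc, card_isUnit_det_and_mulVec_mulVec hA, ← card_isUnit_det_and_col_zero]
  simp only [mulVec_single, op_smul_eq_smul]

theorem card_isUnit_det_and_mulVec_smul_div {𝕜 : Type*} [Semifield 𝕜] [CharZero 𝕜]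
    {c : Fin 2 → R} (hc : IsCoprime (c 0) (c 1)) (t : R) (P : (Fin 2 → R) → Prop)
    [DecidablePred P] :
    (#{M : Matrix (Fin 2) (Fin 2) R | IsUnit M.det ∧ P (M *ᵥ (t • c))} : 𝕜) /
        #{M : Matrix (Fin 2) (Fin 2) R | IsUnit M.det} =
      #{c' : Fin 2 → R | IsCoprime (c' 0) (c' 1) ∧ P (t • c')} /
        #{c' : Fin 2 → R | IsCoprime (c' 0) (c' 1)} := by
  have hunits : 0 < #{x : R | IsUnit x} := card_pos.mpr ⟨1, by simp⟩
  rw [card_isUnit_det_and_mulVec_smul hc, card_isUnit_det_fin_two]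
  push_cast
  exact mul_div_mul_left _ _ (mul_ne_zero (by exact_mod_cast hunits.ne')
    (by exact_mod_cast Fintype.card_ne_zero))

end CommRing

end Matrix

namespace ZMod

variable {p : ℕ} [hp : Fact p.Prime] {w k : ℕ}

theorem exists_eq_mul_of_not_isUnit (hw : 0 < w) {x : ZMod (p ^ w)} (hx : ¬IsUnit x) :
    ∃ y, x = p * y := by
  rw [← natCast_zmod_val x, isUnit_natCast_iff_not_dvd_pow hp.out hw, not_not] at hx
  obtain ⟨m, hm⟩ := hx
  exact ⟨m, by rw [← natCast_zmod_val x, hm, Nat.cast_mul]⟩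

theorem not_isCoprime_mul_mul (hw : 0 < w) (x y : ZMod (p ^ w)) :
    ¬IsCoprime (p * x) (p * y) := fun h =>
  prime_natCast_not_isUnit_pow hp.out hw (isCoprime_self.mp h.of_mul_left_left.of_mul_right_left)

theorem isCoprime_iff_isUnit_or_isUnit (hw : 0 < w) {x y : ZMod (p ^ w)} :
    IsCoprime x y ↔ IsUnit x ∨ IsUnit y := by
  refine ⟨fun h => ?_, fun h => h.elim (·.isCoprime_left y) (·.isCoprime_left x |>.symm)⟩
  by_contra! hxy
  obtain ⟨x', rfl⟩ := exists_eq_mul_of_not_isUnit hw hxy.1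
  obtain ⟨y', rfl⟩ := exists_eq_mul_of_not_isUnit hw hxy.2
  exact not_isCoprime_mul_mul hw x' y' h

open scoped Classical in
theorem card_not_isUnit_prime_pow (hw : 0 < w) :
    #{x : ZMod (p ^ w) | ¬IsUnit x} = p ^ (w - 1) := by
  have hunits : #{x : ZMod (p ^ w) | IsUnit x} = p ^ (w - 1) * (p - 1) := by
    rw [← Nat.totient_prime_pow hp.out hw, ← card_units_eq_totient, ← card_univ,
      ← card_image_of_injective _ Units.val_injective]
    congr 1
    ext x
    simp only [mem_filter, mem_univ, true_and, mem_image]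
    rfl
  have hsum := card_filter_add_card_filter_not (s := (univ : Finset (ZMod (p ^ w)))) (IsUnit ·)
  rw [card_univ, card, hunits] at hsum
  have hpow : p ^ w = p ^ (w - 1) * (p - 1) + p ^ (w - 1) := by
    rw [← Nat.mul_add_one, Nat.sub_add_cancel hp.out.one_lt.le, ← pow_succ,
      Nat.sub_add_cancel hw]
  omega

open scoped Classical in
theorem card_isCoprime_prime_pow (hw : 0 < w) :
    #{c : Fin 2 → ZMod (p ^ w) | IsCoprime (c 0) (c 1)} = (p ^ 2 - 1) * (p ^ (w - 1)) ^ 2 := by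
  have hnot : #{c : Fin 2 → ZMod (p ^ w) | ¬IsCoprime (c 0) (c 1)} = (p ^ (w - 1)) ^ 2 := by
    rw [← card_not_isUnit_prime_pow hw, ← Fintype.card_piFinset_const]
    congr 1
    ext c
    simp [isCoprime_iff_isUnit_or_isUnit hw, Fin.forall_fin_two]
  have hsum := card_filter_add_card_filter_not (s := (univ : Finset (Fin 2 → ZMod (p ^ w))))
    (fun c => IsCoprime (c 0) (c 1))
  rw [card_univ, Fintype.card_fun, card, Fintype.card_fin, hnot] at hsum
  have hpow : (p ^ w) ^ 2 = (p ^ 2 - 1) * (p ^ (w - 1)) ^ 2 + (p ^ (w - 1)) ^ 2 := by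
    rw [← add_one_mul, Nat.sub_add_cancel (Nat.one_le_pow _ _ hp.out.pos), ← mul_pow,
      ← pow_succ', Nat.sub_add_cancel hw]
  omega

theorem exists_lt_eq_pow_mul_of_mul_pow_eq_zero (hk : k ≤ w) {y : ZMod (p ^ w)}
    (h : y * p ^ k = 0) : ∃ j < p ^ k, y = p ^ (w - k) * j := by
  have hpow : p ^ (w - k) * p ^ k = p ^ w := by rw [← pow_add, Nat.sub_add_cancel hk]
  have hdvd : p ^ (w - k) ∣ y.val := by
    rw [← natCast_zmod_val y, ← Nat.cast_pow, ← Nat.cast_mul, natCast_eq_zero_iff] at h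
    exact Nat.dvd_of_mul_dvd_mul_right (pow_pos hp.out.pos k) (by rwa [hpow])
  obtain ⟨j, hj⟩ := hdvd
  refine ⟨j, ?_, by rw [← natCast_zmod_val y, hj]; push_cast; rfl⟩
  have := val_lt y
  rw [hj, ← hpow] at this
  exact Nat.lt_of_mul_lt_mul_left this

theorem exists_natAbs_le_and_eq_add_pow_mul (hk : k ≤ w) {x : ZMod (p ^ w)} {z : ℤ}
    (h : (z : ZMod (p ^ w)) = p ^ k * x) :
    ∃ a : ℤ, a.natAbs ≤ z.natAbs / p ^ k ∧ ∃ j < p ^ k, x = a + p ^ (w - k) * j := by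
  have hdvd : (p ^ k : ℤ) ∣ z := by
    have h' : ((z - p ^ k * x.val : ℤ) : ZMod (p ^ w)) = 0 := by
      push_cast
      rw [natCast_zmod_val, h, sub_self]
    rw [intCast_zmod_eq_zero_iff_dvd] at h'
    have hkw : (p ^ k : ℤ) ∣ ((p ^ w : ℕ) : ℤ) := by
      exact_mod_cast pow_dvd_pow p hk
    simpa using dvd_add (hkw.trans h') (dvd_mul_right _ (x.val : ℤ))
  obtain ⟨a, rfl⟩ := hdvd
  obtain ⟨j, hj, hx⟩ := exists_lt_eq_pow_mul_of_mul_pow_eq_zero hk (y := x - (a : ZMod (p ^ w)))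
    (by rw [sub_mul, mul_comm x, ← h]; push_cast; ring)
  refine ⟨a, ?_, j, hj, by rw [← hx]; ring⟩
  rw [Int.natAbs_mul, Int.natAbs_pow, Int.natAbs_natCast,
    Nat.mul_div_cancel_left _ (pow_pos hp.out.pos k)]

theorem exists_isCoprime_and_eq_pow_smul {v : Fin 2 → ZMod (p ^ w)} (hv : v ≠ 0) :
    ∃ k < w, ∃ c : Fin 2 → ZMod (p ^ w),
      IsCoprime (c 0) (c 1) ∧ v = (p ^ k : ZMod (p ^ w)) • c := by
  have hg : Nat.gcd (v 0).val (v 1).val ≠ 0 := by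
    intro hg
    rw [Nat.gcd_eq_zero_iff, val_eq_zero, val_eq_zero] at hg
    exact hv (funext fun i => by fin_cases i <;> simp [hg.1, hg.2])
  obtain ⟨k, m, hm, hgm⟩ := Nat.exists_eq_pow_mul_and_not_dvd hg p hp.out.one_lt.ne'
  have hdvd (i : Fin 2) : p ^ k ∣ (v i).val := by
    refine (Dvd.intro m hgm.symm).trans ?_
    fin_cases i
    exacts [Nat.gcd_dvd_left _ _, Nat.gcd_dvd_right _ _]
  have hv_eq : v = (p ^ k : ZMod (p ^ w)) • fun i => (((v i).val / p ^ k : ℕ) : ZMod (p ^ w)) := by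
    ext i
    conv_lhs => rw [← natCast_zmod_val (v i), ← Nat.mul_div_cancel' (hdvd i)]
    push_cast
    rfl
  have hkw : k < w := by
    by_contra! hwk
    refine hv (hv_eq.trans ?_)
    rw [show (p ^ k : ZMod (p ^ w)) = 0 by
      exact_mod_cast (natCast_eq_zero_iff _ _).mpr (pow_dvd_pow p hwk), zero_smul]
  refine ⟨k, hkw, _, ?_, hv_eq⟩
  rw [isCoprime_iff_isUnit_or_isUnit (by omega), isUnit_natCast_iff_not_dvd_pow hp.out (by omega),
    isUnit_natCast_iff_not_dvd_pow hp.out (by omega), ← not_and_or]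
  rintro ⟨h0, h1⟩
  have h := Nat.dvd_gcd h0 h1
  rw [Nat.gcd_div (hdvd 0) (hdvd 1), hgm, Nat.mul_div_cancel_left _ (pow_pos hp.out.pos k)] at h
  exact hm h

end ZMod

theorem card_Icc_prod_not_both_even_le (m : ℕ) :
    #{a ∈ Icc (-(m : ℤ)) m ×ˢ Icc (-(m : ℤ)) m | ¬(2 ∣ a.1 ∧ 2 ∣ a.2)} ≤ 8 * m ^ 2 := by
  have heven : 2 * (m / 2) + 1 ≤ #{z ∈ Icc (-(m : ℤ)) m | 2 ∣ z} := by
    calc 2 * (m / 2) + 1 = #(Icc (-((m / 2 : ℕ) : ℤ)) (m / 2 : ℕ)) := by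
          rw [Int.card_Icc]; omega
      _ = #((Icc (-((m / 2 : ℕ) : ℤ)) (m / 2 : ℕ)).image (2 * ·)) :=
          (card_image_of_injective _ (mul_right_injective₀ two_ne_zero)).symm
      _ ≤ _ := card_le_card fun z hz => by
          obtain ⟨a, ha, rfl⟩ := mem_image.mp hz
          rw [mem_Icc] at ha
          exact mem_filter.mpr ⟨mem_Icc.mpr ⟨by omega, by omega⟩, dvd_mul_right 2 a⟩
  have hsum := card_filter_add_card_filter_not (s := Icc (-(m : ℤ)) m ×ˢ Icc (-(m : ℤ)) m)
    (fun a => 2 ∣ a.1 ∧ 2 ∣ a.2)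
  rw [filter_product (fun z : ℤ => 2 ∣ z) (fun z : ℤ => 2 ∣ z), card_product, card_product,
    Int.card_Icc, show (m + 1 - -m : ℤ).toNat = 2 * m + 1 by omega] at hsum
  generalize m / 2 = t at heven
  nlinarith [Nat.mul_le_mul heven heven, Nat.le_mul_self m]

open scoped Classical in
theorem ZMod.card_isCoprime_and_two_pow_smul_mem_box_le {w k : ℕ} (hk : k < w) (C : ℕ) :
    #{c : Fin 2 → ZMod (2 ^ w) | IsCoprime (c 0) (c 1) ∧
      ∀ i, ∃ z : ℤ, z.natAbs ≤ C ∧ (z : ZMod (2 ^ w)) = ((2 : ZMod (2 ^ w)) ^ k • c) i} ≤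
      8 * C ^ 2 := by
  set m := C / 2 ^ k
  let A := {a ∈ Icc (-(m : ℤ)) m ×ˢ Icc (-(m : ℤ)) m | ¬(2 ∣ a.1 ∧ 2 ∣ a.2)}
  let J := range (2 ^ k) ×ˢ range (2 ^ k)
  let φ : (ℤ × ℤ) × (ℕ × ℕ) → Fin 2 → ZMod (2 ^ w) := fun q =>
    ![q.1.1 + 2 ^ (w - k) * q.2.1, q.1.2 + 2 ^ (w - k) * q.2.2]
  calc _ ≤ #((A ×ˢ J).image φ) := card_le_card fun c hc => by
        obtain ⟨hcop, hbox⟩ := (mem_filter.mp hc).2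
        choose z hz hzc using hbox
        choose a ha j hj hcj using fun i =>
          exists_natAbs_le_and_eq_add_pow_mul (p := 2) hk.le (by simpa using hzc i)
        have hIcc (i : Fin 2) : a i ∈ Icc (-(m : ℤ)) m := mem_Icc.mpr <| by
          have := (ha i).trans (Nat.div_le_div_right (c := 2 ^ k) (hz i))
          omega
        refine mem_image.mpr ⟨((a 0, a 1), (j 0, j 1)), mem_product.mpr ⟨mem_filter.mpr
          ⟨mem_product.mpr ⟨hIcc 0, hIcc 1⟩, ?_⟩,
          mem_product.mpr ⟨mem_range.mpr (hj 0), mem_range.mpr (hj 1)⟩⟩, ?_⟩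
        · rintro ⟨⟨b0, hb0⟩, ⟨b1, hb1⟩⟩
          dsimp only at hb0 hb1
          have h2 : (2 : ZMod (2 ^ w)) ^ (w - k) = 2 * 2 ^ (w - k - 1) := by
            rw [← pow_succ', Nat.sub_add_cancel (by omega : 1 ≤ w - k)]
          apply not_isCoprime_mul_mul (p := 2) (w := w) (by omega) (b0 + 2 ^ (w - k - 1) * j 0)
            (b1 + 2 ^ (w - k - 1) * j 1)
          rw [hcj 0, hcj 1, hb0, hb1] at hcop
          push_cast at hcop ⊢
          rw [h2] at hcop
          convert hcop using 1
          all_goals rw [mul_add, mul_assoc]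
        · ext i; fin_cases i <;> simp [φ, hcj]
    _ ≤ #A * #J := card_image_le.trans (card_product _ _).le
    _ ≤ 8 * m ^ 2 * (2 ^ k) ^ 2 := by
        gcongr
        · exact card_Icc_prod_not_both_even_le m
        · simp [J, card_product, sq]
    _ = 8 * (m * 2 ^ k) ^ 2 := by ring
    _ ≤ 8 * C ^ 2 := by gcongr; exact Nat.div_mul_le_self C _

open Classical in
theorem stmt14 (s : ℕ) [NeZero s] (hs : ∃ w : ℕ, s = 2 ^ w) (C : ℕ)
    (v : Fin 2 → ZMod s) (hv : v ≠ 0) :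
    ((((Finset.univ.filter fun M : Matrix (Fin 2) (Fin 2) (ZMod s) => IsUnit M.det).filter
          fun M => ∀ i, ∃ z : ℤ, z.natAbs ≤ C ∧ (z : ZMod s) = M.mulVec v i).card : ℝ) /
        ((Finset.univ.filter fun M : Matrix (Fin 2) (Fin 2) (ZMod s) =>
            IsUnit M.det).card : ℝ))
      ≤ (32 / 3) * (C : ℝ) ^ 2 / ((s : ℝ) ^ 2) := by
  obtain ⟨w, rfl⟩ := hs
  obtain ⟨k, hkw, c, hc, rfl⟩ := ZMod.exists_isCoprime_and_eq_pow_smul hv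
  rw [filter_filter, card_isUnit_det_and_mulVec_smul_div hc _
      (fun u => ∀ i, ∃ z : ℤ, z.natAbs ≤ C ∧ (z : ZMod (2 ^ w)) = u i),
    ZMod.card_isCoprime_prime_pow (by omega)]
  have hbox := (Nat.cast_le (α := ℝ)).mpr (ZMod.card_isCoprime_and_two_pow_smul_mem_box_le hkw C)
  have hq : ((2 ^ w : ℕ) : ℝ) = 2 * 2 ^ (w - 1) := by
    rw [Nat.cast_pow, Nat.cast_ofNat, ← pow_succ', Nat.sub_add_cancel (by omega)]
  rw [hq, div_le_div_iff₀ (by positivity) (by positivity)]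
  push_cast at hbox ⊢
  nlinarith [mul_le_mul_of_nonneg_right hbox (sq_nonneg ((2 : ℝ) ^ (w - 1)))]
end

section
/- Let A be an M × N matrix whose rows are chosen uniformly at random from the rows of the N × N Fourier matrix (with each entry of unit modulus, normalized so columns have unit norm after dividing by √M). If M ≥ b·μ^{−2}·log(N/γ) for a sufficiently large constant b, then with probability at least 1 − γ the coherence of A/√M is at most μ; consequently, for M = Θ(t³ log N), the matrix A/√M satisfies the restricted isometry property of order t with constant 1/2 with probability at least 1 − 1/N^t. -/
/-!
For distinct columns `j ≠ j'`, the Gram entry of the row-sampled DFT matrix is `1/M` times a sum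
of `M` i.i.d. copies of the unit-modulus variable `v ↦ conj (F v j) * F v j'`, where
`F v j = exp (-2πi v j / N)`; its mean is zero by orthogonality of the DFT columns. Hoeffding's
inequality for the real and imaginary parts and a union bound over the `N²` pairs of columns give
`ℙ(coherence > μ) ≤ 4 N² exp (-μ² M / 8)`, which is at most `γ` once `M ≥ 32 μ⁻² log (N / γ)`.

A matrix with unit columns and coherence `μ` distorts `‖y‖²` by at most `(t - 1) μ ‖y‖²` on
`t`-sparse `y`, since only the off-diagonal Gram entries contribute; `μ = 1 / (2t)` and
`γ = N^(-t)` then give the RIP claim.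
-/

open MeasureTheory ProbabilityTheory Finset Real Matrix
open scoped ComplexConjugate

lemma exists_unit_re_mul_ge_of_lt_norm {z : ℂ} {s : ℝ} (h : s < ‖z‖) :
    ∃ k : Fin 4, s / 2 ≤ (![1, -1, -Complex.I, Complex.I] k * z).re := by
  by_contra! hlt
  have h0 : z.re < s / 2 := by simpa using hlt 0
  have h1 : -z.re < s / 2 := by simpa using hlt 1
  have h2 : z.im < s / 2 := by simpa using hlt 2
  have h3 : -z.im < s / 2 := by simpa using hlt 3
  linarith [Complex.norm_le_abs_re_add_abs_im z, abs_lt.2 ⟨by linarith, h0⟩,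
    abs_lt.2 ⟨by linarith, h2⟩]

section Hoeffding

variable {ι α : Type*} [Fintype ι] [MeasurableSpace α] {ν : Measure α} [IsProbabilityMeasure ν]

lemma measureReal_pi_sum_ge_le {f : α → ℝ} (hf : Measurable f) (hbound : ∀ x, |f x| ≤ 1)
    (hmean : ∫ x, f x ∂ν = 0) {s : ℝ} (hs : 0 ≤ s) :
    (Measure.pi fun _ : ι => ν).real {ω | s ≤ ∑ i, f (ω i)} ≤
      exp (-s ^ 2 / (2 * Fintype.card ι)) := by
  have hsubG : ∀ i, HasSubgaussianMGF (fun ω : ι → α => f (ω i)) 1 (Measure.pi fun _ => ν) := by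
    intro i
    rw [show (1 : NNReal) = (‖(1 : ℝ) - -1‖₊ / 2) ^ 2 by ext; norm_num]
    exact hasSubgaussianMGF_of_mem_Icc_of_integral_eq_zero
      (hf.comp (measurable_pi_apply i)).aemeasurable (ae_of_all _ fun ω => abs_le.1 (hbound (ω i)))
      (by rw [integral_comp_eval hf.aestronglyMeasurable, hmean])
  simpa using HasSubgaussianMGF.measure_sum_ge_le_of_iIndepFun
    (iIndepFun_pi (X := fun _ => f) fun _ => hf.aemeasurable) (s := univ) (fun i _ => hsubG i) hs

lemma measureReal_pi_norm_sum_gt_le {g : α → ℂ} (hg : Measurable g) (hbound : ∀ x, ‖g x‖ ≤ 1)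
    (hmean : ∫ x, g x ∂ν = 0) {s : ℝ} (hs : 0 ≤ s) :
    (Measure.pi fun _ : ι => ν).real {ω | s < ‖∑ i, g (ω i)‖} ≤
      4 * exp (-s ^ 2 / (8 * Fintype.card ι)) := by
  let c : Fin 4 → ℂ := ![1, -1, -Complex.I, Complex.I]
  have hc : ∀ k, ‖c k‖ = 1 := by intro k; fin_cases k <;> simp [c]
  have hsub : {ω : ι → α | s < ‖∑ i, g (ω i)‖} ⊆
      ⋃ k, {ω | s / 2 ≤ ∑ i, (c k * g (ω i)).re} := by
    intro ω hω
    obtain ⟨k, hk⟩ := exists_unit_re_mul_ge_of_lt_norm hω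
    exact Set.mem_iUnion.2 ⟨k, by simpa [Finset.mul_sum, Complex.re_sum] using hk⟩
  have hint : Integrable g ν := .of_bound hg.aestronglyMeasurable 1 (ae_of_all _ hbound)
  have hk : ∀ k, (Measure.pi fun _ : ι => ν).real {ω | s / 2 ≤ ∑ i, (c k * g (ω i)).re} ≤
      exp (-s ^ 2 / (8 * Fintype.card ι)) := by
    intro k
    have hmean' : ∫ x, (c k * g x).re ∂ν = 0 := by
      have := integral_re (𝕜 := ℂ) (hint.const_mul (c k))
      simp only [RCLike.re_to_complex] at this
      rw [this, integral_const_mul, hmean, mul_zero, Complex.zero_re]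
    refine (measureReal_pi_sum_ge_le (f := fun x => (c k * g x).re) (by fun_prop)
      (fun x => (Complex.abs_re_le_norm _).trans (by simp [hc, hbound])) hmean'
      (by positivity : 0 ≤ s / 2)).trans_eq ?_
    ring_nf
  calc _ ≤ (Measure.pi fun _ : ι => ν).real (⋃ k, {ω | s / 2 ≤ ∑ i, (c k * g (ω i)).re}) :=
        measureReal_mono hsub
    _ ≤ ∑ k, (Measure.pi fun _ : ι => ν).real {ω | s / 2 ≤ ∑ i, (c k * g (ω i)).re} :=
        measureReal_iUnion_fintype_le _
    _ ≤ ∑ _k : Fin 4, exp (-s ^ 2 / (8 * Fintype.card ι)) := sum_le_sum fun k _ => hk k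
    _ = 4 * exp (-s ^ 2 / (8 * Fintype.card ι)) := by simp

end Hoeffding

section Coherence

variable {𝕜 m : Type*} [RCLike 𝕜] [Fintype m]

lemma ofReal_sum_norm_sq (x : m → 𝕜) : ((∑ i, ‖x i‖ ^ 2 : ℝ) : 𝕜) = star x ⬝ᵥ x := by
  simp [dotProduct, RCLike.conj_mul]

variable {n : Type*} [Fintype n] [DecidableEq n]

lemma sum_sum_erase_mul_le {a : n → ℝ} {t : ℕ} (ht : {j | a j ≠ 0}.ncard ≤ t) :
    ∑ j, ∑ j' ∈ univ.erase j, a j * a j' ≤ (t - 1) * ∑ j, a j ^ 2 := by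
  set s := univ.filter fun j => a j ≠ 0
  have hs : (s.card : ℝ) ≤ t := by
    rw [← Set.ncard_coe_finset, coe_filter]
    exact_mod_cast by simpa using ht
  have hsq : (∑ j, a j) ^ 2 = ∑ j, a j ^ 2 + ∑ j, ∑ j' ∈ univ.erase j, a j * a j' := by
    rw [sq, sum_mul_sum, ← sum_add_distrib]
    refine sum_congr rfl fun j _ => ?_
    rw [← add_sum_erase _ _ (mem_univ j), sq]
  have hcs : (∑ j, a j) ^ 2 ≤ t * ∑ j, a j ^ 2 := calc
    (∑ j, a j) ^ 2 = (∑ j ∈ s, a j) ^ 2 := by rw [sum_filter_ne_zero]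
    _ ≤ s.card * ∑ j ∈ s, a j ^ 2 := sq_sum_le_card_mul_sum_sq (s := s) (f := a)
    _ ≤ t * ∑ j, a j ^ 2 := by
      gcongr
      exact subset_univ s
  linarith

lemma norm_star_dotProduct_mulVec_le {E : Matrix n n 𝕜} (hdiag : ∀ j, E j j = 0) {μ : ℝ}
    (hoff : ∀ j j', j ≠ j' → ‖E j j'‖ ≤ μ) (y : n → 𝕜) :
    ‖star y ⬝ᵥ E *ᵥ y‖ ≤ μ * ∑ j, ∑ j' ∈ univ.erase j, ‖y j‖ * ‖y j'‖ := by
  rw [mul_sum]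
  refine (norm_sum_le _ _).trans (sum_le_sum fun j _ => ?_)
  rw [mulVec, dotProduct, ← add_sum_erase _ _ (mem_univ j), hdiag, zero_mul, zero_add,
    mul_sum, Pi.star_apply, mul_sum]
  refine (norm_sum_le _ _).trans (sum_le_sum fun j' hj' => ?_)
  rw [norm_mul, norm_mul, norm_star]
  have := hoff j j' (ne_of_mem_erase hj').symm
  calc ‖y j‖ * (‖E j j'‖ * ‖y j'‖) ≤ ‖y j‖ * (μ * ‖y j'‖) := by gcongr
    _ = μ * (‖y j‖ * ‖y j'‖) := by ring

lemma ofReal_sum_norm_mulVec_sq_sub (A : Matrix m n 𝕜) (y : n → 𝕜) :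
    ((∑ i, ‖(A *ᵥ y) i‖ ^ 2 - ∑ j, ‖y j‖ ^ 2 : ℝ) : 𝕜) = star y ⬝ᵥ (Aᴴ * A - 1) *ᵥ y := by
  rw [RCLike.ofReal_sub, ofReal_sum_norm_sq, ofReal_sum_norm_sq, sub_mulVec, dotProduct_sub,
    one_mulVec, star_mulVec, dotProduct_mulVec, vecMul_vecMul, ← dotProduct_mulVec]

lemma abs_sum_norm_mulVec_sq_sub_le (A : Matrix m n 𝕜) (hdiag : ∀ j, (Aᴴ * A) j j = 1) {μ : ℝ}
    (hμ : 0 ≤ μ) (hoff : ∀ j j', j ≠ j' → ‖(Aᴴ * A) j j'‖ ≤ μ) {t : ℕ} {y : n → 𝕜}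
    (hy : {j | y j ≠ 0}.ncard ≤ t) :
    |∑ i, ‖(A *ᵥ y) i‖ ^ 2 - ∑ j, ‖y j‖ ^ 2| ≤ (t - 1) * μ * ∑ j, ‖y j‖ ^ 2 := by
  have hE : ∀ j j', j ≠ j' → ‖(Aᴴ * A - 1 : Matrix n n 𝕜) j j'‖ ≤ μ := fun j j' h => by
    simpa [one_apply_ne h] using hoff j j' h
  calc |∑ i, ‖(A *ᵥ y) i‖ ^ 2 - ∑ j, ‖y j‖ ^ 2|
      = ‖star y ⬝ᵥ (Aᴴ * A - 1) *ᵥ y‖ := by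
        rw [← ofReal_sum_norm_mulVec_sq_sub, RCLike.norm_ofReal]
    _ ≤ μ * ∑ j, ∑ j' ∈ univ.erase j, ‖y j‖ * ‖y j'‖ :=
        norm_star_dotProduct_mulVec_le (by simp [hdiag]) hE y
    _ ≤ μ * ((t - 1) * ∑ j, ‖y j‖ ^ 2) := by
        gcongr
        exact sum_sum_erase_mul_le (by simpa using hy)
    _ = (t - 1) * μ * ∑ j, ‖y j‖ ^ 2 := by ring

def HasRIP (A : Matrix m n 𝕜) (t : ℕ) (δ : ℝ) : Prop :=
  ∀ y : n → 𝕜, {j | y j ≠ 0}.ncard ≤ t →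
    (1 - δ) * ∑ j, ‖y j‖ ^ 2 ≤ ∑ i, ‖(A *ᵥ y) i‖ ^ 2 ∧
      ∑ i, ‖(A *ᵥ y) i‖ ^ 2 ≤ (1 + δ) * ∑ j, ‖y j‖ ^ 2

theorem hasRIP_of_gram (A : Matrix m n 𝕜) (hdiag : ∀ j, (Aᴴ * A) j j = 1) {μ : ℝ} (hμ : 0 ≤ μ)
    (hoff : ∀ j j', j ≠ j' → ‖(Aᴴ * A) j j'‖ ≤ μ) {t : ℕ} {δ : ℝ} (hδ : (t - 1) * μ ≤ δ) :
    HasRIP A t δ := by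
  intro y hy
  have hdev := abs_le.1 (abs_sum_norm_mulVec_sq_sub_le A hdiag hμ hoff hy)
  have hT : 0 ≤ ∑ j, ‖y j‖ ^ 2 := by positivity
  have hδT := mul_le_mul_of_nonneg_right hδ hT
  constructor <;> linarith [hdev.1, hdev.2]

end Coherence

lemma IsPrimitiveRoot.sum_inv_pow_mul_pow_eq_zero {K : Type*} [Field K] {w : K} {N : ℕ}
    (hw : IsPrimitiveRoot w N) {j j' : ℕ} (hj : j < N) (hj' : j' < N) (hne : j ≠ j') :
    ∑ k ∈ range N, (w ^ (k * j))⁻¹ * w ^ (k * j') = 0 := by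
  set ζ := (w ^ j)⁻¹ * w ^ j'
  have hζ1 : ζ ≠ 1 := by
    intro h
    have hw0 : w ^ j ≠ 0 := pow_ne_zero _ (hw.ne_zero (by omega))
    exact hne (hw.pow_inj hj hj' (by rw [inv_mul_eq_one₀ hw0] at h; exact h))
  have hζN : ζ ^ N = 1 := by
    rw [mul_pow, inv_pow, ← pow_mul, ← pow_mul, pow_mul', hw.pow_eq_one, pow_mul', hw.pow_eq_one]
    simp
  calc ∑ k ∈ range N, (w ^ (k * j))⁻¹ * w ^ (k * j') = ∑ k ∈ range N, ζ ^ k := by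
        refine sum_congr rfl fun k _ => ?_
        rw [mul_pow, inv_pow, ← pow_mul, ← pow_mul, mul_comm j, mul_comm j']
    _ = 0 := by rw [geom_sum_eq hζ1, hζN, sub_self, zero_div]

noncomputable def dftEntry (N k j : ℕ) : ℂ := Complex.exp (-(2 * π * Complex.I) * (k * j) / N)

lemma dftEntry_eq_pow (N k j : ℕ) :
    dftEntry N k j = (Complex.exp (2 * π * Complex.I / N))⁻¹ ^ (k * j) := by
  rw [dftEntry, ← Complex.exp_neg, ← Complex.exp_nat_mul]
  push_cast
  ring_nf

lemma norm_dftEntry (N k j : ℕ) : ‖dftEntry N k j‖ = 1 := by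
  rw [dftEntry, Complex.norm_exp]
  simp

lemma sum_conj_dftEntry_mul_dftEntry {N : ℕ} {j j' : Fin N} (hne : j ≠ j') :
    ∑ k : Fin N, conj (dftEntry N k j) * dftEntry N k j' = 0 := by
  have hN : N ≠ 0 := by rintro rfl; exact j.elim0
  have hw := (Complex.isPrimitiveRoot_exp N hN).inv
  simp_rw [← Complex.inv_eq_conj (norm_dftEntry _ _ _), dftEntry_eq_pow]
  generalize (Complex.exp (2 * π * Complex.I / N))⁻¹ = w at hw ⊢
  exact (Fin.sum_univ_eq_sum_range (fun k => (w ^ (k * j))⁻¹ * w ^ (k * j')) N).trans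
    (hw.sum_inv_pow_mul_pow_eq_zero j.isLt j'.isLt (Fin.val_injective.ne hne))

lemma integral_conj_dftEntry_mul_dftEntry {N : ℕ} [NeZero N] {j j' : Fin N} (hne : j ≠ j') :
    ∫ v, conj (dftEntry N v j) * dftEntry N v j' ∂(PMF.uniformOfFintype (Fin N)).toMeasure = 0 := by
  simp [PMF.integral_eq_sum, ← mul_sum, sum_conj_dftEntry_mul_dftEntry hne]

noncomputable def sampledDFT (N Mn : ℕ) (r : Fin Mn → Fin N) : Matrix (Fin Mn) (Fin N) ℂ :=
  of fun i j => dftEntry N (r i) j / (√Mn : ℂ)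

lemma sampledDFT_gram_apply (N Mn : ℕ) (r : Fin Mn → Fin N) (j j' : Fin N) :
    ((sampledDFT N Mn r)ᴴ * sampledDFT N Mn r) j j' =
      (∑ i, conj (dftEntry N (r i) j) * dftEntry N (r i) j') / Mn := by
  simp only [mul_apply, conjTranspose_apply, sampledDFT, of_apply, sum_div]
  refine sum_congr rfl fun i _ => ?_
  rw [star_div₀, Complex.star_def, Complex.conj_ofReal, div_mul_div_comm, ← Complex.ofReal_mul,
    Real.mul_self_sqrt (Nat.cast_nonneg Mn), Complex.ofReal_natCast]

lemma sampledDFT_gram_diag {N Mn : ℕ} (hMn : Mn ≠ 0) (r : Fin Mn → Fin N) (j : Fin N) :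
    ((sampledDFT N Mn r)ᴴ * sampledDFT N Mn r) j j = 1 := by
  simp [sampledDFT_gram_apply, Complex.conj_mul', norm_dftEntry, hMn]

lemma measureReal_exists_gram_sampledDFT_gt_le {N Mn : ℕ} [NeZero N] (hMn : 0 < Mn) {μ : ℝ}
    (hμ : 0 ≤ μ) :
    (Measure.pi fun _ : Fin Mn => (PMF.uniformOfFintype (Fin N)).toMeasure).real
        {r | ∃ j j', j ≠ j' ∧ μ < ‖((sampledDFT N Mn r)ᴴ * sampledDFT N Mn r) j j'‖} ≤
      N ^ 2 * (4 * exp (-(μ ^ 2 * Mn) / 8)) := by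
  set P := Measure.pi fun _ : Fin Mn => (PMF.uniformOfFintype (Fin N)).toMeasure
  have hMn' : (0 : ℝ) < Mn := by exact_mod_cast hMn
  have hpair : ∀ p : Fin N × Fin N,
      P.real {r | p.1 ≠ p.2 ∧ μ < ‖((sampledDFT N Mn r)ᴴ * sampledDFT N Mn r) p.1 p.2‖} ≤
        4 * exp (-(μ ^ 2 * Mn) / 8) := by
    rintro ⟨j, j'⟩
    by_cases hne : j = j'
    · subst hne
      simp only [ne_eq, not_true_eq_false, false_and, Set.ofPred_false, measureReal_empty]
      positivity
    have hset : {r | j ≠ j' ∧ μ < ‖((sampledDFT N Mn r)ᴴ * sampledDFT N Mn r) j j'‖} =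
        {r | μ * Mn < ‖∑ i, conj (dftEntry N (r i) j) * dftEntry N (r i) j'‖} := by
      ext r
      simp only [Set.mem_ofPred_eq, sampledDFT_gram_apply, norm_div, Complex.norm_natCast,
        lt_div_iff₀ hMn', hne, ne_eq, not_false_eq_true, true_and]
    rw [hset]
    refine (measureReal_pi_norm_sum_gt_le
      (g := fun v : Fin N => conj (dftEntry N v j) * dftEntry N v j') (by fun_prop)
      (fun v => by simp [norm_dftEntry]) (integral_conj_dftEntry_mul_dftEntry hne)
      (by positivity)).trans_eq ?_
    congr 2
    simp only [Fintype.card_fin]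
    field_simp
  calc P.real {r | ∃ j j', j ≠ j' ∧ μ < ‖((sampledDFT N Mn r)ᴴ * sampledDFT N Mn r) j j'‖}
      ≤ P.real (⋃ p : Fin N × Fin N,
          {r | p.1 ≠ p.2 ∧ μ < ‖((sampledDFT N Mn r)ᴴ * sampledDFT N Mn r) p.1 p.2‖}) :=
        measureReal_mono fun r ⟨j, j', h⟩ => Set.mem_iUnion.2 ⟨(j, j'), h⟩
    _ ≤ ∑ p : Fin N × Fin N,
          P.real {r | p.1 ≠ p.2 ∧ μ < ‖((sampledDFT N Mn r)ᴴ * sampledDFT N Mn r) p.1 p.2‖} :=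
        measureReal_iUnion_fintype_le _
    _ ≤ ∑ _p : Fin N × Fin N, 4 * exp (-(μ ^ 2 * Mn) / 8) := sum_le_sum fun p _ => hpair p
    _ = N ^ 2 * (4 * exp (-(μ ^ 2 * Mn) / 8)) := by simp [sq]

theorem measure_exists_gram_sampledDFT_gt_le {N Mn : ℕ} [NeZero N] (hN : 2 ≤ N) (hMn : 0 < Mn)
    {μ γ : ℝ} (hμ : 0 < μ) (hγ : 0 < γ) (hγ1 : γ ≤ 1)
    (hM : 32 * μ⁻¹ ^ 2 * log (N / γ) ≤ Mn) :
    (Measure.pi fun _ : Fin Mn => (PMF.uniformOfFintype (Fin N)).toMeasure)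
        {r | ∃ j j', j ≠ j' ∧ μ < ‖((sampledDFT N Mn r)ᴴ * sampledDFT N Mn r) j j'‖} ≤
      ENNReal.ofReal γ := by
  rw [← ofReal_measureReal]
  refine ENNReal.ofReal_le_ofReal ((measureReal_exists_gram_sampledDFT_gt_le hMn hμ.le).trans ?_)
  have hexp : exp (-(μ ^ 2 * Mn) / 8) ≤ (γ / N) ^ 4 := calc
    exp (-(μ ^ 2 * Mn) / 8) ≤ exp (-(4 * log (N / γ))) := by
      gcongr
      have := mul_le_mul_of_nonneg_left hM (sq_nonneg μ)
      field_simp at this ⊢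
      linarith
    _ = (γ / N) ^ 4 := by
      rw [neg_mul_eq_mul_neg, ← log_inv, inv_div, ← exp_log (by positivity : 0 < (γ / N) ^ 4),
        log_pow]
      norm_num
  have hN4 : (4 : ℝ) ≤ N ^ 2 := by nlinarith [(show (2 : ℝ) ≤ N by exact_mod_cast hN)]
  calc (N : ℝ) ^ 2 * (4 * exp (-(μ ^ 2 * Mn) / 8)) ≤ N ^ 2 * (4 * (γ / N) ^ 4) := by gcongr
    _ = γ ^ 3 * (4 / N ^ 2) * γ := by field_simp
    _ ≤ 1 * 1 * γ := by
        gcongr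
        · exact pow_le_one₀ hγ.le hγ1
        · rw [div_le_one (by positivity)]; exact hN4
    _ = γ := by ring

theorem measure_not_hasRIP_sampledDFT_le {N Mn t : ℕ} [NeZero N] (hN : 2 ≤ N) (ht : 1 ≤ t)
    (hMn : 0 < Mn) (hM : 256 * (t : ℝ) ^ 3 * log N ≤ Mn) :
    (Measure.pi fun _ : Fin Mn => (PMF.uniformOfFintype (Fin N)).toMeasure)
        {r | ¬ HasRIP (sampledDFT N Mn r) t (1 / 2)} ≤ ENNReal.ofReal (1 / (N : ℝ) ^ t) := by
  have ht' : (1 : ℝ) ≤ t := by exact_mod_cast ht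
  have hN1 : (1 : ℝ) ≤ N := by exact_mod_cast (show 1 ≤ N by omega)
  have hγ1 : 1 / (N : ℝ) ^ t ≤ 1 := div_le_one_of_le₀ (one_le_pow₀ hN1) (by positivity)
  have hM' : 32 * ((2 * t : ℝ)⁻¹)⁻¹ ^ 2 * log (N / (1 / (N : ℝ) ^ t)) ≤ Mn := by
    rw [inv_inv, one_div, div_inv_eq_mul, ← pow_succ', log_pow]
    push_cast
    nlinarith [log_nonneg hN1]
  refine (measure_mono fun r hr => ?_).trans
    (measure_exists_gram_sampledDFT_gt_le hN hMn (by positivity) (by positivity) hγ1 hM')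
  by_contra hcoh
  simp only [Set.mem_ofPred_eq, not_exists, not_and, not_lt] at hcoh
  refine hr (hasRIP_of_gram _ (sampledDFT_gram_diag hMn.ne' r) (by positivity) hcoh ?_)
  field_simp
  linarith

/-- Let `A` be the `Mn × N` matrix whose rows are chosen uniformly at
random from the rows of the `N × N` Fourier matrix, with columns normalized by `1/√Mn`
so they have unit norm.  (1) There is a constant `b` such that if
`Mn ≥ b·μ⁻²·log(N/γ)`, then with probability at least `1 − γ` the coherence of `A` is
at most `μ`.  (2) Consequently, there is a constant `b` such that for
`Mn ≥ b·t³·log N` the matrix `A` satisfies the RIP of order `t` with constant `1/2`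
with probability at least `1 − 1/N^t`. -/
theorem stmt17 :
    (∃ b : ℝ, 0 < b ∧
      ∀ (N Mn : ℕ) [NeZero N] (μc γ : ℝ), 2 ≤ N → 0 < Mn → 0 < μc → μc ≤ 1 →
        0 < γ → γ ≤ 1 →
        b * μc⁻¹ ^ 2 * Real.log ((N : ℝ) / γ) ≤ (Mn : ℝ) →
        (Measure.pi fun _ : Fin Mn => (PMF.uniformOfFintype (Fin N)).toMeasure)
          {r : Fin Mn → Fin N | ∃ j j' : Fin N, j ≠ j' ∧
            μc < ‖∑ i : Fin Mn,
              (starRingEnd ℂ)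
                  (Complex.exp (-(2 * Real.pi * Complex.I) * ((r i : ℕ) * (j : ℕ)) / N) /
                    (Real.sqrt Mn : ℂ)) *
                (Complex.exp (-(2 * Real.pi * Complex.I) * ((r i : ℕ) * (j' : ℕ)) / N) /
                  (Real.sqrt Mn : ℂ))‖}
          ≤ ENNReal.ofReal γ) ∧
    (∃ b : ℝ, 0 < b ∧
      ∀ (N Mn t : ℕ) [NeZero N], 2 ≤ N → 2 ≤ t → 0 < Mn →
        b * (t : ℝ) ^ 3 * Real.log N ≤ (Mn : ℝ) →
        (Measure.pi fun _ : Fin Mn => (PMF.uniformOfFintype (Fin N)).toMeasure)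
          {r : Fin Mn → Fin N |
            ¬ ∀ y : Fin N → ℂ, {j | y j ≠ 0}.ncard ≤ t →
              ((1 - (1 : ℝ) / 2) * ∑ j : Fin N, ‖y j‖ ^ 2 ≤
                ∑ i : Fin Mn, ‖∑ j : Fin N,
                  (Complex.exp (-(2 * Real.pi * Complex.I) * ((r i : ℕ) * (j : ℕ)) / N) /
                    (Real.sqrt Mn : ℂ)) * y j‖ ^ 2 ∧
              ∑ i : Fin Mn, ‖∑ j : Fin N,
                  (Complex.exp (-(2 * Real.pi * Complex.I) * ((r i : ℕ) * (j : ℕ)) / N) /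
                    (Real.sqrt Mn : ℂ)) * y j‖ ^ 2 ≤
                (1 + (1 : ℝ) / 2) * ∑ j : Fin N, ‖y j‖ ^ 2)}
          ≤ ENNReal.ofReal (1 / (N : ℝ) ^ t)) :=
  ⟨⟨32, by norm_num, fun _ _ _ _ _ hN hMn hμ _ hγ hγ1 hM =>
      measure_exists_gram_sampledDFT_gt_le hN hMn hμ hγ hγ1 hM⟩,
    ⟨256, by norm_num, fun _ _ _ _ hN ht hMn hM =>
      measure_not_hasRIP_sampledDFT_le hN (by omega) hMn hM⟩⟩
end

section
/- Let y = y_head + y_residue + y_gauss ∈ ℂ^{√n} where supp(y_head) = {i} with |y_head_i| ≥ L, ‖y_residue‖₁ < εL, and y_gauss ~ N_ℂ(0, σ²I_{√n}) with σ = εL/n^{1/4}. Then with probability at least 1 − e^{−Ω(√n)}, ‖y_{−i}‖₂² ≤ O(ε²L²) < L² ≤ |y_i|², where y_{−i} denotes y with coordinate i removed. -/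
/-!
Away from the head coordinate, `‖y₋ᵢ‖₂² ≤ 2‖y_residue‖₁² + 2‖y_gauss‖₂² ≤ 2ε²L² + 2‖y_gauss‖₂²`,
so it suffices that `‖y_gauss‖₂² ≤ 8mσ² = 8ε²L²`. This is a Chernoff bound: with `t = 1/(4σ²)`
each coordinate has `E exp(t|g_j|²) = 1/(1 - 2tσ²) = 2`, so by Markov's inequality
`P(‖y_gauss‖₂² > 8mσ²) ≤ 2^m e^{-2m} ≤ e^{-m}`.
-/

open MeasureTheory ProbabilityTheory Real Finset
open scoped ENNReal

lemma lintegral_pi_prod_eq_pow {ι E : Type*} [Fintype ι] [MeasurableSpace E]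
    (μ : Measure E) [IsProbabilityMeasure μ] {f : E → ℝ≥0∞} (hf : Measurable f) :
    ∫⁻ x : ι → E, ∏ i, f (x i) ∂Measure.pi (fun _ => μ) = (∫⁻ x, f x ∂μ) ^ Fintype.card ι := by
  rw [lintegral_prod_eq_prod_lintegral_of_indepFun _ _
    (iIndepFun_pi fun _ => hf.aemeasurable) fun i => hf.comp (measurable_pi_apply i)]
  simp_rw [(measurePreserving_eval (fun _ : ι => μ) _).lintegral_comp hf, prod_const, card_univ]

lemma lintegral_exp_mul_sq_gaussianReal {v : NNReal} (hv : v ≠ 0) {t : ℝ} (ht : 2 * t * v < 1) :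
    ∫⁻ x, ENNReal.ofReal (exp (t * x ^ 2)) ∂gaussianReal 0 v
      = ENNReal.ofReal (√(1 - 2 * t * v))⁻¹ := by
  have hv' : (0 : ℝ) < v := by positivity
  have hb : 0 < (1 - 2 * t * v) / (2 * v) := div_pos (by linarith) (by positivity)
  rw [gaussianReal_of_var_ne_zero _ hv,
    lintegral_withDensity_eq_lintegral_mul _ (measurable_gaussianPDF _ _) (by fun_prop)]
  have hdensity : ∀ x : ℝ, (gaussianPDF 0 v * fun x => ENNReal.ofReal (exp (t * x ^ 2))) x
      = ENNReal.ofReal ((√(2 * π * v))⁻¹ * exp (-((1 - 2 * t * v) / (2 * v)) * x ^ 2)) := by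
    intro x
    rw [Pi.mul_apply, gaussianPDF, gaussianPDFReal, ← ENNReal.ofReal_mul (by positivity),
      mul_assoc, ← exp_add]
    congr 3
    field_simp
    ring
  simp_rw [hdensity]
  rw [← ofReal_integral_eq_lintegral_ofReal ((integrable_exp_neg_mul_sq hb).const_mul _)
    (.of_forall fun x => by positivity), integral_const_mul, integral_gaussian,
    div_div_eq_mul_div, sqrt_div' _ (by linarith : (0 : ℝ) ≤ 1 - 2 * t * v)]
  congr 1
  have : 0 < √(2 * π * v) := by positivity
  have : 0 < √(1 - 2 * t * v) := sqrt_pos.2 (by linarith)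
  field_simp

lemma lintegral_exp_mul_normSq_gaussianReal_prod {v : NNReal} (hv : v ≠ 0) {t : ℝ}
    (ht : 2 * t * v < 1) :
    ∫⁻ p, ENNReal.ofReal (exp (t * (p.1 ^ 2 + p.2 ^ 2)))
        ∂(gaussianReal 0 v).prod (gaussianReal 0 v)
      = ENNReal.ofReal (1 - 2 * t * v)⁻¹ := by
  have hf : Measurable fun x : ℝ => ENNReal.ofReal (exp (t * x ^ 2)) := by fun_prop
  simp_rw [mul_add, exp_add, ENNReal.ofReal_mul (exp_nonneg _)]
  rw [lintegral_prod_mul hf.aemeasurable hf.aemeasurable,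
    lintegral_exp_mul_sq_gaussianReal hv ht, ← ENNReal.ofReal_mul (by positivity), ← mul_inv,
    mul_self_sqrt (by linarith)]

variable {ι : Type*} [Fintype ι]

lemma measure_lt_sum_sq_gaussianReal_prod_le {v : NNReal} (hv : v ≠ 0) :
    (Measure.pi fun _ : ι => (gaussianReal 0 v).prod (gaussianReal 0 v))
        {g | 8 * Fintype.card ι * v < ∑ j, ((g j).1 ^ 2 + (g j).2 ^ 2)}
      ≤ ENNReal.ofReal (exp (-Fintype.card ι)) := by
  have hv' : (0 : ℝ) < v := by positivity
  set μ := Measure.pi fun _ : ι => (gaussianReal 0 v).prod (gaussianReal 0 v)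
  set S : (ι → ℝ × ℝ) → ℝ := fun g => ∑ j, ((g j).1 ^ 2 + (g j).2 ^ 2)
  set t : ℝ := (4 * v)⁻¹
  have ht : 2 * t * v = 1 / 2 := by simp only [t]; field_simp; norm_num
  have hmean : ∫⁻ g, ENNReal.ofReal (exp (t * S g)) ∂μ = ENNReal.ofReal 2 ^ Fintype.card ι := by
    simp_rw [S, mul_sum, exp_sum, ENNReal.ofReal_prod_of_nonneg fun _ _ => exp_nonneg _]
    rw [lintegral_pi_prod_eq_pow (ι := ι) _
        (f := fun p : ℝ × ℝ => ENNReal.ofReal (exp (t * (p.1 ^ 2 + p.2 ^ 2)))) (by fun_prop),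
      lintegral_exp_mul_normSq_gaussianReal_prod hv (by linarith), ht]
    norm_num
  set c := ENNReal.ofReal (exp (2 * Fintype.card ι))
  have hsub : {g | 8 * Fintype.card ι * v < S g} ⊆ {g | c ≤ ENNReal.ofReal (exp (t * S g))} := by
    intro g hg
    refine ENNReal.ofReal_le_ofReal (exp_le_exp.2 ?_)
    have : (2 : ℝ) * Fintype.card ι = t * (8 * Fintype.card ι * v) := by
      simp only [t]; field_simp; ring
    rw [this]
    exact mul_le_mul_of_nonneg_left (le_of_lt hg) (by positivity)
  have hmarkov :
      c * μ {g | c ≤ ENNReal.ofReal (exp (t * S g))} ≤ ENNReal.ofReal 2 ^ Fintype.card ι :=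
    hmean ▸ mul_meas_ge_le_lintegral₀ (by fun_prop) c
  calc μ {g | 8 * Fintype.card ι * v < S g}
      ≤ μ {g | c ≤ ENNReal.ofReal (exp (t * S g))} := measure_mono hsub
    _ ≤ ENNReal.ofReal 2 ^ Fintype.card ι / c :=
      ENNReal.le_div_iff_mul_le (.inl (ENNReal.ofReal_pos.2 (exp_pos _)).ne')
        (.inl ENNReal.ofReal_ne_top)
        |>.2 (mul_comm c _ ▸ hmarkov)
    _ = ENNReal.ofReal (2 ^ Fintype.card ι / exp (2 * Fintype.card ι)) := by
      rw [← ENNReal.ofReal_pow zero_le_two, ENNReal.ofReal_div_of_pos (exp_pos _)]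
    _ ≤ ENNReal.ofReal (exp (-Fintype.card ι)) := by
      refine ENNReal.ofReal_le_ofReal ?_
      rw [div_le_iff₀ (exp_pos _), ← exp_add, show -(Fintype.card ι : ℝ) + 2 * Fintype.card ι
        = Fintype.card ι * 1 by ring, exp_nat_mul]
      exact pow_le_pow_left₀ zero_le_two (by linarith [add_one_le_exp (1 : ℝ)]) _

lemma ofReal_one_sub_exp_le_measure_sum_sq_le {v : NNReal} (hv : v ≠ 0) :
    ENNReal.ofReal (1 - exp (-Fintype.card ι))
      ≤ (Measure.pi fun _ : ι => (gaussianReal 0 v).prod (gaussianReal 0 v))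
        {g | ∑ j, ((g j).1 ^ 2 + (g j).2 ^ 2) ≤ 8 * Fintype.card ι * v} := by
  have hmeas : MeasurableSet
      {g : ι → ℝ × ℝ | 8 * Fintype.card ι * v < ∑ j, ((g j).1 ^ 2 + (g j).2 ^ 2)} :=
    measurableSet_lt (by fun_prop) (by fun_prop)
  rw [ENNReal.ofReal_sub _ (exp_nonneg _), ENNReal.ofReal_one]
  calc 1 - ENNReal.ofReal (exp (-Fintype.card ι))
      ≤ 1 - _ := tsub_le_tsub_left (measure_lt_sum_sq_gaussianReal_prod_le hv) 1
    _ = _ := (prob_compl_eq_one_sub hmeas).symm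
    _ ≤ _ := measure_mono fun _ => le_of_not_gt (α := ℝ)

lemma sum_erase_norm_add_add_sq_le {E : Type*} [SeminormedAddCommGroup E] [DecidableEq ι]
    {i : ι} {a b c : ι → E} (ha : ∀ j, j ≠ i → a j = 0) :
    ∑ j ∈ univ.erase i, ‖a j + b j + c j‖ ^ 2 ≤ 2 * (∑ j, ‖b j‖) ^ 2 + 2 * ∑ j, ‖c j‖ ^ 2 := by
  have hterm : ∀ j, ‖b j + c j‖ ^ 2 ≤ 2 * ‖b j‖ ^ 2 + 2 * ‖c j‖ ^ 2 := fun j => by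
    nlinarith [norm_add_le (b j) (c j), norm_nonneg (b j + c j), sq_nonneg (‖b j‖ - ‖c j‖)]
  calc ∑ j ∈ univ.erase i, ‖a j + b j + c j‖ ^ 2
      = ∑ j ∈ univ.erase i, ‖b j + c j‖ ^ 2 :=
        sum_congr rfl fun j hj => by rw [ha j (ne_of_mem_erase hj), zero_add]
    _ ≤ ∑ j, ‖b j + c j‖ ^ 2 :=
        sum_le_sum_of_subset_of_nonneg (erase_subset i univ) fun _ _ _ => by positivity
    _ ≤ ∑ j, (2 * ‖b j‖ ^ 2 + 2 * ‖c j‖ ^ 2) := sum_le_sum fun j _ => hterm j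
    _ ≤ 2 * (∑ j, ‖b j‖) ^ 2 + 2 * ∑ j, ‖c j‖ ^ 2 := by
      rw [sum_add_distrib, ← mul_sum, ← mul_sum]
      gcongr
      exact sum_sq_le_sq_sum_of_nonneg fun j _ => norm_nonneg _

/-- Let `y = y_head + y_residue + y_gauss ∈ ℂ^m` (`m = √n`), where
`supp(y_head) = {i}` with `|y_head i| ≥ L`, `‖y_residue‖₁ < εL`, and `y_gauss` is complex
Gaussian with standard deviation `σ = εL/n^{1/4} = εL/√m` in each of the real and
imaginary parts of each coordinate.  Then (for some absolute constants `C, c₁` and all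
sufficiently small `ε ≤ ε₀`), with probability at least `1 − e^{−c₁·m}`,
`‖y₋ᵢ‖₂² ≤ C·ε²L² < L² ≤ |y_head i|²`. -/
theorem stmt18 :
    ∃ Cc c₁ ε₀ : ℝ, 0 < Cc ∧ 0 < c₁ ∧ 0 < ε₀ ∧
      ∀ (m : ℕ) (L ε σ : ℝ) (i : Fin m) (yh yr : Fin m → ℂ),
        0 < m → 0 < L → 0 < ε → ε ≤ ε₀ →
        σ = ε * L / Real.sqrt m →
        (∀ j, j ≠ i → yh j = 0) → L ≤ ‖yh i‖ →
        (∑ j, ‖yr j‖) < ε * L →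
        ENNReal.ofReal (1 - Real.exp (-(c₁ * m))) ≤
          (Measure.pi fun _ : Fin m =>
              (gaussianReal 0 (Real.toNNReal (σ ^ 2))).prod
                (gaussianReal 0 (Real.toNNReal (σ ^ 2))))
            {g : Fin m → ℝ × ℝ |
              (∑ j ∈ Finset.univ.erase i,
                  ‖yh j + yr j + (((g j).1 : ℂ) + ((g j).2 : ℂ) * Complex.I)‖ ^ 2)
                    ≤ Cc * ε ^ 2 * L ^ 2 ∧
              Cc * ε ^ 2 * L ^ 2 < L ^ 2 ∧
              L ^ 2 ≤ ‖yh i‖ ^ 2} := by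
  refine ⟨18, 1, 1 / 5, by norm_num, one_pos, by norm_num, ?_⟩
  intro m L ε σ i yh yr hm hL hε hε₀ hσ hyh hyhi hyr
  have hvar : ((σ ^ 2).toNNReal : ℝ) = ε ^ 2 * L ^ 2 / m := by
    rw [coe_toNNReal _ (sq_nonneg σ), hσ, div_pow, sq_sqrt (Nat.cast_nonneg m), mul_pow]
  have hv : (σ ^ 2).toNNReal ≠ 0 := by
    rw [← NNReal.coe_ne_zero, hvar]
    positivity
  have hthreshold : 8 * (m : ℝ) * (ε ^ 2 * L ^ 2 / m) = 8 * ε ^ 2 * L ^ 2 := by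
    field_simp
  have hgood := ofReal_one_sub_exp_le_measure_sum_sq_le (ι := Fin m) hv
  rw [Fintype.card_fin, hvar, hthreshold] at hgood
  have hsmall : 18 * ε ^ 2 * L ^ 2 < L ^ 2 := by
    have : 18 * ε ^ 2 < 1 := by nlinarith
    nlinarith [pow_pos hL 2]
  rw [one_mul]
  refine hgood.trans (measure_mono fun g hg => ⟨?_, hsmall, pow_le_pow_left₀ hL.le hyhi 2⟩)
  calc _ ≤ 2 * (∑ j, ‖yr j‖) ^ 2 + 2 * ∑ j, ‖((g j).1 : ℂ) + (g j).2 * Complex.I‖ ^ 2 :=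
        sum_erase_norm_add_add_sq_le hyh
    _ ≤ 2 * (ε * L) ^ 2 + 2 * (8 * ε ^ 2 * L ^ 2) := by
        simp_rw [Complex.sq_norm, Complex.normSq_add_mul_I]
        gcongr
        exact hg
    _ = 18 * ε ^ 2 * L ^ 2 := by ring
end
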